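/- arXiv:1907.01080 — 3 statements merged into one kernel-verified Lean document; each statement's English description precedes it below -/
import Mathlib

section
/- Let p be a prime, n ≥ 1, K = ZMod p, and let P, Q ∈ (Fin n → K) be two distinct points. Then the number of distinct reduced Gröbner bases of the vanishing ideal I({P, Q}) ⊆ MvPolynomial (Fin n) K equals the number of coordinates i ∈ Fin n with P i ≠ Q i. -/
open MvPolynomial

/-- The leading monomial of `f` with respect to the monomial order `m`:
the `m`-largest monomial in the support of `f` (equal to `0` if `f = 0`). -/
noncomputable def leadMon {n : ℕ} {K : Type*} [CommSemiring K]
    (m : MonomialOrder (Fin n)) (f : MvPolynomial (Fin n) K) : Fin n →₀ ℕ :=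
  m.toSyn.symm (f.support.sup fun d => m.toSyn d)

/-- The leading coefficient of `f` with respect to the monomial order `m`. -/
noncomputable def leadCoeff {n : ℕ} {K : Type*} [CommSemiring K]
    (m : MonomialOrder (Fin n)) (f : MvPolynomial (Fin n) K) : K :=
  f.coeff (leadMon m f)

/-- `G` is a Gröbner basis of the ideal `I` with respect to the monomial order `m`:
`G` is a finite set of nonzero elements of `I` such that the leading monomial of every
nonzero element of `I` is divisible by the leading monomial of some `g ∈ G`.
(Divisibility of monomials is the pointwise order `≤` on exponent vectors.) -/
def IsGroebnerBasis {n : ℕ} {K : Type*} [Field K] (m : MonomialOrder (Fin n))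
    (I : Ideal (MvPolynomial (Fin n) K)) (G : Finset (MvPolynomial (Fin n) K)) : Prop :=
  (∀ g ∈ G, g ≠ 0) ∧ ((G : Set (MvPolynomial (Fin n) K)) ⊆ I) ∧
    ∀ f ∈ I, f ≠ 0 → ∃ g ∈ G, leadMon m g ≤ leadMon m f

/-- `G` is the reduced Gröbner basis of `I` with respect to `m`: it is a Gröbner basis,
every element has leading coefficient `1`, and no monomial in the support of any `g ∈ G`
is divisible by the leading monomial of another element of `G`. -/
def IsReducedGroebnerBasis {n : ℕ} {K : Type*} [Field K] (m : MonomialOrder (Fin n))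
    (I : Ideal (MvPolynomial (Fin n) K)) (G : Finset (MvPolynomial (Fin n) K)) : Prop :=
  IsGroebnerBasis m I G ∧ (∀ g ∈ G, leadCoeff m g = 1) ∧
    ∀ g ∈ G, ∀ g' ∈ G, g' ≠ g → ∀ d ∈ g.support, ¬ leadMon m g' ≤ d

/-- The number of distinct reduced Gröbner bases of `I`, i.e. the cardinality of the set
of all `G` that are the reduced Gröbner basis of `I` with respect to some monomial order. -/
noncomputable def numReducedGB {n : ℕ} {K : Type*} [Field K]
    (I : Ideal (MvPolynomial (Fin n) K)) : ℕ :=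
  Set.ncard {G : Finset (MvPolynomial (Fin n) K) |
    ∃ m : MonomialOrder.{0,0} (Fin n), IsReducedGroebnerBasis m I G}


namespace TwoPointGB

open Finsupp MvPolynomial

variable {n : ℕ} {K : Type*} [Field K]

/-- lex monomial order transported along a permutation of the variables -/
noncomputable def mo (π : Equiv.Perm (Fin n)) : MonomialOrder (Fin n) where
  syn := Lex (Fin n →₀ ℕ)
  toSyn := ((Finsupp.domCongr π : (Fin n →₀ ℕ) ≃+ (Fin n →₀ ℕ))).trans
      { toEquiv := toLex, map_add' := toLex_add }
  toSyn_monotone := by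
    intro a b h
    exact Finsupp.toLex_monotone (show Finsupp.equivMapDomain π a ≤ Finsupp.equivMapDomain π b from Finsupp.le_def.mpr fun x => by
      simpa [Finsupp.equivMapDomain_apply] using Finsupp.le_def.mp h (π.symm x))

@[simp] lemma mo_toSyn (π : Equiv.Perm (Fin n)) (c : Fin n →₀ ℕ) :
    (mo π).toSyn c = toLex (Finsupp.equivMapDomain π c) := rfl

lemma lex_le_top {t : Fin n} (htop : ∀ k, k ≤ t) {ν : Fin n →₀ ℕ}
    (h : toLex ν ≤ toLex (Finsupp.single t 1)) : ν = 0 ∨ ν = Finsupp.single t 1 := by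
  rcases eq_or_lt_of_le h with h | h
  · exact Or.inr (toLex.injective h)
  · left
    obtain ⟨j, hj1, hj2⟩ := Finsupp.Lex.lt_iff.mp h
    have hjt : j = t := by
      by_contra hne
      have h0 : (Finsupp.single t 1 : Fin n →₀ ℕ) j = 0 :=
        Finsupp.single_eq_of_ne' (Ne.symm hne)
      have : ν j < 0 := by simpa [h0] using hj2
      omega
    subst hjt
    have hνj : ν j = 0 := by
      have : ν j < 1 := by simpa using hj2
      omega
    ext k
    rcases lt_or_eq_of_le (htop k) with hk | hk
    · have := hj1 k hk
      simpa [Finsupp.single_eq_of_ne' (ne_of_lt hk).symm] using this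
    · subst hk; simpa using hνj

lemma equivMapDomain_inj (π : Equiv.Perm (Fin n)) :
    Function.Injective (Finsupp.equivMapDomain π : (Fin n →₀ ℕ) → (Fin n →₀ ℕ)) := by
  intro a b hab
  exact (Finsupp.domCongr π).injective (by simpa [Finsupp.domCongr_apply] using hab)

lemma mo_le_unit {i t : Fin n} (htop : ∀ k, k ≤ t) {μ : Fin n →₀ ℕ}
    (h : (mo (Equiv.swap i t)).toSyn μ ≤ (mo (Equiv.swap i t)).toSyn (Finsupp.single i 1)) :
    μ = 0 ∨ μ = Finsupp.single i 1 := by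
  set π := Equiv.swap i t
  have hsing : Finsupp.equivMapDomain π (Finsupp.single i 1) = Finsupp.single t 1 := by
    rw [Finsupp.equivMapDomain_single, Equiv.swap_apply_left]
  have h' : toLex (Finsupp.equivMapDomain π μ) ≤ toLex (Finsupp.single t 1) := by
    rw [mo_toSyn, mo_toSyn, hsing] at h; exact h
  rcases lex_le_top htop h' with h0 | h1
  · exact Or.inl (equivMapDomain_inj π (by simpa using h0))
  · exact Or.inr (equivMapDomain_inj π (by rw [h1, hsing]))

lemma mo_unit_le_unit {i t : Fin n} (htop : ∀ k, k ≤ t) (j : Fin n) :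
    (mo (Equiv.swap i t)).toSyn (Finsupp.single i 1) ≤
      (mo (Equiv.swap i t)).toSyn (Finsupp.single j 1) := by
  rcases le_total ((mo (Equiv.swap i t)).toSyn (Finsupp.single i 1))
    ((mo (Equiv.swap i t)).toSyn (Finsupp.single j 1)) with h | h
  · exact h
  · rcases mo_le_unit htop h with h0 | h1
    · exact absurd (Finsupp.single_eq_zero.mp h0) one_ne_zero
    · exact le_of_eq (congrArg _ h1.symm)

section leadMon

variable (m : MonomialOrder (Fin n))

lemma leadMon_mem_support {f : MvPolynomial (Fin n) K} (hf : f ≠ 0) :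
    leadMon m f ∈ f.support := by
  obtain ⟨d, hd, h⟩ := Finset.exists_mem_eq_sup f.support
    (MvPolynomial.support_nonempty.mpr hf) (fun d => m.toSyn d)
  unfold leadMon
  rw [h, AddEquiv.symm_apply_apply]
  exact hd

lemma coeff_leadMon_ne_zero {f : MvPolynomial (Fin n) K} (hf : f ≠ 0) :
    f.coeff (leadMon m f) ≠ 0 :=
  MvPolynomial.mem_support_iff.mp (leadMon_mem_support m hf)

lemma le_leadMon {f : MvPolynomial (Fin n) K} {d : Fin n →₀ ℕ} (hd : d ∈ f.support) :
    m.toSyn d ≤ m.toSyn (leadMon m f) := by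
  unfold leadMon
  rw [AddEquiv.apply_symm_apply]
  exact Finset.le_sup hd

lemma leadMon_eq {f : MvPolynomial (Fin n) K} {D : Fin n →₀ ℕ} (hD : f.coeff D ≠ 0)
    (h : ∀ d ∈ f.support, m.toSyn d ≤ m.toSyn D) : leadMon m f = D := by
  have h1 : m.toSyn (leadMon m f) ≤ m.toSyn D := by
    unfold leadMon
    rw [AddEquiv.apply_symm_apply]
    exact Finset.sup_le h
  have h2 := le_leadMon m (MvPolynomial.mem_support_iff.mpr hD)
  exact m.toSyn.injective (le_antisymm h1 h2)

lemma syn_zero_le (d : Fin n →₀ ℕ) : m.toSyn 0 ≤ m.toSyn d := by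
  rw [map_zero, ← m.bot_eq_zero]
  exact bot_le

end leadMon

section finsupp

lemma le_single {d : Fin n →₀ ℕ} {i : Fin n} {k : ℕ} (h : d ≤ Finsupp.single i k) :
    ∃ c, c ≤ k ∧ d = Finsupp.single i c := by
  refine ⟨d i, by simpa using Finsupp.le_def.mp h i, ?_⟩
  ext a
  rcases eq_or_ne a i with rfl | ha
  · simp
  · have h2 := Finsupp.le_def.mp h a
    rw [Finsupp.single_eq_of_ne' (Ne.symm ha)] at h2
    rw [Finsupp.single_eq_of_ne' (Ne.symm ha)]
    omega

lemma fle_zero {d : Fin n →₀ ℕ} (h : d ≤ 0) : d = 0 := by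
  ext a
  have := Finsupp.le_def.mp h a
  simpa using this

lemma sne_zero (i : Fin n) {k : ℕ} (hk : k ≠ 0) : (Finsupp.single i k : Fin n →₀ ℕ) ≠ 0 :=
  fun h0 => hk (Finsupp.single_eq_zero.mp h0)

lemma sne_single {i j : Fin n} {c k : ℕ} (h : c ≠ k) (h2 : c ≠ 0 ∨ i = j) :
    (Finsupp.single i c : Fin n →₀ ℕ) ≠ Finsupp.single j k := by
  intro hEq
  rcases eq_or_ne i j with rfl | hij
  · have := DFunLike.congr_fun hEq i
    simp at this
    exact h this
  · have h1 := DFunLike.congr_fun hEq i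
    rw [Finsupp.single_eq_same, Finsupp.single_eq_of_ne' (Ne.symm hij)] at h1
    rcases h2 with hc | rfl
    · exact hc h1
    · exact hij rfl

lemma sne_single' {i j : Fin n} {c k : ℕ} (hij : i ≠ j) (hc : c ≠ 0) :
    (Finsupp.single i c : Fin n →₀ ℕ) ≠ Finsupp.single j k := by
  intro hEq
  have h1 := DFunLike.congr_fun hEq i
  rw [Finsupp.single_eq_same, Finsupp.single_eq_of_ne' (Ne.symm hij)] at h1
  exact hc h1

lemma single_le_self {i : Fin n} {d : Fin n →₀ ℕ} (h : 1 ≤ d i) :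
    Finsupp.single i 1 ≤ d := Finsupp.single_le_iff.mpr h

end finsupp

section polys

lemma repr_subset {f : MvPolynomial (Fin n) K} {s : Finset (Fin n →₀ ℕ)}
    (h : f.support ⊆ s) : f = ∑ d ∈ s, monomial d (f.coeff d) := by
  conv_lhs => rw [f.as_sum]
  exact Finset.sum_subset h fun x _ hx => by
    rw [MvPolynomial.notMem_support_iff.mp hx]; exact map_zero _

lemma supp_monomial_sub (d : Fin n →₀ ℕ) (c : K) :
    (monomial d c).support ⊆ {d} := by
  classical
  rw [MvPolynomial.support_monomial]
  split <;> simp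

variable (P Q : Fin n → K)

noncomputable def lin (i j : Fin n) : MvPolynomial (Fin n) K :=
  monomial (Finsupp.single j 1) 1
    + monomial (Finsupp.single i 1) (-((Q j - P j) * (Q i - P i)⁻¹))
    + monomial 0 (-(P j - (Q j - P j) * (Q i - P i)⁻¹ * P i))

noncomputable def quad (i : Fin n) : MvPolynomial (Fin n) K :=
  monomial (Finsupp.single i 2) 1 + monomial (Finsupp.single i 1) (-(P i + Q i))
    + monomial 0 (P i * Q i)

noncomputable def gen (i j : Fin n) : MvPolynomial (Fin n) K :=
  if j = i then quad P Q i else lin P Q i j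

open scoped Classical in
noncomputable def GBset (i : Fin n) : Finset (MvPolynomial (Fin n) K) :=
  Finset.image (gen P Q i) Finset.univ

lemma supp_lin (i j : Fin n) :
    (lin P Q i j).support ⊆ {Finsupp.single j 1, Finsupp.single i 1, 0} := by
  classical
  intro d hd
  unfold lin at hd
  have h1 := MvPolynomial.support_add hd
  simp only [Finset.mem_union] at h1
  rcases h1 with h1 | h1
  · have h2 := MvPolynomial.support_add h1
    simp only [Finset.mem_union] at h2
    rcases h2 with h2 | h2
    · have := supp_monomial_sub _ _ h2
      simp only [Finset.mem_singleton] at this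
      simp [this]
    · have := supp_monomial_sub _ _ h2
      simp only [Finset.mem_singleton] at this
      simp [this]
  · have := supp_monomial_sub _ _ h1
    simp only [Finset.mem_singleton] at this
    simp [this]

lemma supp_quad (i : Fin n) :
    (quad P Q i).support ⊆ {Finsupp.single i 2, Finsupp.single i 1, 0} := by
  classical
  intro d hd
  unfold quad at hd
  have h1 := MvPolynomial.support_add hd
  simp only [Finset.mem_union] at h1
  rcases h1 with h1 | h1
  · have h2 := MvPolynomial.support_add h1
    simp only [Finset.mem_union] at h2
    rcases h2 with h2 | h2
    · have := supp_monomial_sub _ _ h2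
      simp only [Finset.mem_singleton] at this
      simp [this]
    · have := supp_monomial_sub _ _ h2
      simp only [Finset.mem_singleton] at this
      simp [this]
  · have := supp_monomial_sub _ _ h1
    simp only [Finset.mem_singleton] at this
    simp [this]

lemma coeff_lin (i : Fin n) {j : Fin n} (hji : j ≠ i) :
    (lin P Q i j).coeff (Finsupp.single j 1) = 1 := by
  classical
  unfold lin
  rw [MvPolynomial.coeff_add, MvPolynomial.coeff_add]
  rw [MvPolynomial.coeff_monomial, MvPolynomial.coeff_monomial, MvPolynomial.coeff_monomial]
  rw [if_pos rfl, if_neg (sne_single' (Ne.symm hji) one_ne_zero),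
    if_neg (Ne.symm (sne_zero j one_ne_zero))]
  ring

lemma coeff_quad (i : Fin n) :
    (quad P Q i).coeff (Finsupp.single i 2) = 1 := by
  classical
  unfold quad
  rw [MvPolynomial.coeff_add, MvPolynomial.coeff_add]
  rw [MvPolynomial.coeff_monomial, MvPolynomial.coeff_monomial, MvPolynomial.coeff_monomial]
  rw [if_pos rfl, if_neg (sne_single (by norm_num : (1:ℕ) ≠ 2) (Or.inr rfl)),
    if_neg (Ne.symm (sne_zero i two_ne_zero))]
  ring

lemma lin_ne_zero (i : Fin n) {j : Fin n} (hji : j ≠ i) : lin P Q i j ≠ 0 := fun h0 => by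
  have := coeff_lin P Q i hji
  rw [h0] at this
  simp at this

lemma quad_ne_zero (i : Fin n) : quad P Q i ≠ 0 := fun h0 => by
  have := coeff_quad P Q i
  rw [h0] at this
  simp at this

lemma mem_two {f : MvPolynomial (Fin n) K} :
    f ∈ vanishingIdeal K ({P, Q} : Set (Fin n → K)) ↔ eval P f = 0 ∧ eval Q f = 0 := by
  rw [mem_vanishingIdeal_iff]
  simp only [aeval_eq_eval]
  constructor
  · intro h
    exact ⟨h P (by simp), h Q (by simp)⟩
  · rintro ⟨h1, h2⟩ x hx
    simp only [Set.mem_insert_iff, Set.mem_singleton_iff] at hx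
    rcases hx with rfl | rfl
    · exact h1
    · exact h2

lemma eval_lin (i j : Fin n) (s : Fin n → K) :
    eval s (lin P Q i j) =
      s j + (-((Q j - P j) * (Q i - P i)⁻¹)) * s i
        + (-(P j - (Q j - P j) * (Q i - P i)⁻¹ * P i)) := by
  simp [lin, eval_monomial, Finsupp.prod_single_index]

lemma eval_quad (i : Fin n) (s : Fin n → K) :
    eval s (quad P Q i) = s i ^ 2 + (-(P i + Q i)) * s i + P i * Q i := by
  simp [quad, eval_monomial, Finsupp.prod_single_index]
  ring

lemma lin_mem {i : Fin n} (hi : P i ≠ Q i) (j : Fin n) :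
    lin P Q i j ∈ vanishingIdeal K ({P, Q} : Set (Fin n → K)) := by
  have hd : Q i - P i ≠ 0 := sub_ne_zero.mpr (Ne.symm hi)
  rw [mem_two]
  constructor
  · rw [eval_lin]; ring
  · rw [eval_lin]; field_simp; ring

lemma quad_mem (i : Fin n) :
    quad P Q i ∈ vanishingIdeal K ({P, Q} : Set (Fin n → K)) := by
  rw [mem_two]
  constructor <;> (rw [eval_quad]; ring)

end polys

section reprs

lemma repr_pair {f : MvPolynomial (Fin n) K} {d1 d2 : Fin n →₀ ℕ} (h12 : d1 ≠ d2)
    (h : f.support ⊆ {d1, d2}) :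
    f = monomial d1 (f.coeff d1) + monomial d2 (f.coeff d2) := by
  classical
  have h0 := repr_subset h
  rwa [Finset.sum_insert (by simpa using h12), Finset.sum_singleton] at h0

lemma repr_triple {f : MvPolynomial (Fin n) K} {d1 d2 d3 : Fin n →₀ ℕ} (h12 : d1 ≠ d2)
    (h13 : d1 ≠ d3) (h23 : d2 ≠ d3) (h : f.support ⊆ {d1, d2, d3}) :
    f = monomial d1 (f.coeff d1) + monomial d2 (f.coeff d2) + monomial d3 (f.coeff d3) := by
  classical
  have h0 := repr_subset h
  rw [Finset.sum_insert (by simp [h12, h13]), Finset.sum_insert (by simpa using h23),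
    Finset.sum_singleton] at h0
  exact h0.trans (by ring)

lemma not_single_le {a b : Fin n} {c k : ℕ} (h : k < c ∨ (a ≠ b ∧ c ≠ 0)) :
    ¬ (Finsupp.single a c : Fin n →₀ ℕ) ≤ Finsupp.single b k := by
  intro hle
  have h2 := Finsupp.single_le_iff.mp hle
  rcases eq_or_ne b a with rfl | hba
  · rw [Finsupp.single_eq_same] at h2
    rcases h with h | ⟨hab, hc⟩
    · omega
    · exact hab rfl
  · rw [Finsupp.single_eq_of_ne' hba] at h2
    rcases h with h | ⟨hab, hc⟩
    · omega
    · exact hc (Nat.le_zero.mp h2)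

lemma not_single_le_zero {a : Fin n} {c : ℕ} (hc : c ≠ 0) :
    ¬ (Finsupp.single a c : Fin n →₀ ℕ) ≤ 0 := fun h =>
  hc (Finsupp.single_eq_zero.mp (fle_zero h))

end reprs

section soundness

variable (P Q : Fin n → K)

lemma leadMon_lin {i t : Fin n} (htop : ∀ k, k ≤ t) {j : Fin n} (hji : j ≠ i) :
    leadMon (mo (Equiv.swap i t)) (lin P Q i j) = Finsupp.single j 1 := by
  apply leadMon_eq
  · rw [coeff_lin P Q i hji]; exact one_ne_zero
  · intro d hd
    have hmem := supp_lin P Q i j hd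
    simp only [Finset.mem_insert, Finset.mem_singleton] at hmem
    rcases hmem with rfl | rfl | rfl
    · exact le_rfl
    · exact mo_unit_le_unit htop j
    · exact syn_zero_le _ _

lemma leadMon_quad {i t : Fin n} (htop : ∀ k, k ≤ t) :
    leadMon (mo (Equiv.swap i t)) (quad P Q i) = Finsupp.single i 2 := by
  apply leadMon_eq
  · rw [coeff_quad P Q i]; exact one_ne_zero
  · intro d hd
    have hmem := supp_quad P Q i hd
    simp only [Finset.mem_insert, Finset.mem_singleton] at hmem
    rcases hmem with rfl | rfl | rfl
    · exact le_rfl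
    · exact (mo (Equiv.swap i t)).toSyn_monotone
        (Finsupp.single_le_iff.mpr (by simp))
    · exact syn_zero_le _ _

theorem soundness {i t : Fin n} (htop : ∀ k, k ≤ t) (hi : P i ≠ Q i) :
    IsReducedGroebnerBasis (mo (Equiv.swap i t))
      (vanishingIdeal K ({P, Q} : Set (Fin n → K))) (GBset P Q i) := by
  classical
  set m := mo (Equiv.swap i t) with hmdef
  have hgen_mem : ∀ j, gen P Q i j ∈ GBset P Q i := fun j => by
    unfold GBset
    exact Finset.mem_image.mpr ⟨j, Finset.mem_univ j, rfl⟩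
  have hmem : ∀ g ∈ GBset P Q i, ∃ j, g = gen P Q i j := by
    intro g hg
    unfold GBset at hg
    obtain ⟨j, _, rfl⟩ := Finset.mem_image.mp hg
    exact ⟨j, rfl⟩
  have hlm : ∀ j, leadMon m (gen P Q i j) =
      if j = i then Finsupp.single i 2 else Finsupp.single j 1 := by
    intro j
    unfold gen
    rcases eq_or_ne j i with rfl | hji
    · rw [if_pos rfl, if_pos rfl]; exact leadMon_quad P Q htop
    · rw [if_neg hji, if_neg hji]; exact leadMon_lin P Q htop hji
  have hlc : ∀ j, (gen P Q i j).coeff (leadMon m (gen P Q i j)) = 1 := by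
    intro j
    rw [hlm]
    unfold gen
    rcases eq_or_ne j i with rfl | hji
    · rw [if_pos rfl, if_pos rfl]; exact coeff_quad P Q _
    · rw [if_neg hji, if_neg hji]; exact coeff_lin P Q i hji
  have hne : ∀ j, gen P Q i j ≠ 0 := by
    intro j h0
    have := hlc j
    rw [h0] at this
    simp at this
  refine ⟨⟨?_, ?_, ?_⟩, ?_, ?_⟩
  · intro g hg
    obtain ⟨j, rfl⟩ := hmem g hg
    exact hne j
  · intro g hg
    obtain ⟨j, rfl⟩ := hmem g (by exact hg)
    unfold gen
    rcases eq_or_ne j i with rfl | hji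
    · rw [if_pos rfl]; exact quad_mem P Q _
    · rw [if_neg hji]; exact lin_mem P Q hi j
  · -- main GB property
    intro f hf hf0
    by_contra hcon
    push_neg at hcon
    have h2 : ∀ j, j ≠ i → (leadMon m f) j = 0 := by
      intro j hji
      have := hcon (gen P Q i j) (hgen_mem j)
      rw [hlm j, if_neg hji] at this
      by_contra hpos
      exact this (Finsupp.single_le_iff.mpr (by omega))
    have h3 : (leadMon m f) i ≤ 1 := by
      have := hcon (gen P Q i i) (hgen_mem i)
      rw [hlm i, if_pos rfl] at this
      by_contra hpos
      exact this (Finsupp.single_le_iff.mpr (by omega))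
    have hle : leadMon m f ≤ Finsupp.single i 1 := by
      rw [Finsupp.le_def]
      intro a
      rcases eq_or_ne a i with rfl | ha
      · simpa using h3
      · rw [h2 a ha]
        exact Nat.zero_le _
    have hsupp : f.support ⊆ {Finsupp.single i 1, 0} := by
      intro d hd
      have hd1 : m.toSyn d ≤ m.toSyn (Finsupp.single i 1) :=
        le_trans (le_leadMon m hd) (m.toSyn_monotone hle)
      rcases mo_le_unit htop hd1 with rfl | rfl
      · simp
      · simp
    have hrepr := repr_pair (f := f) (sne_zero i one_ne_zero) hsupp
    set b := f.coeff (Finsupp.single i 1) with hbdef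
    set a := f.coeff 0 with hadef
    have heval : ∀ s : Fin n → K,
        eval s ((monomial (Finsupp.single i 1)) b + (monomial 0) a) = b * s i + a := by
      intro s
      simp [eval_monomial, Finsupp.prod_single_index]
    obtain ⟨he1, he2⟩ := (mem_two P Q).mp hf
    rw [hrepr, heval] at he1 he2
    have hb : b = 0 := by
      have hmul : b * (P i - Q i) = 0 := by linear_combination he1 - he2
      rcases mul_eq_zero.mp hmul with hb | hb
      · exact hb
      · exact absurd (sub_eq_zero.mp hb) hi
    have ha : a = 0 := by
      rw [hb] at he1
      linear_combination he1
    apply hf0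
    rw [hrepr, hb, ha]
    simp
  · intro g hg
    obtain ⟨j, rfl⟩ := hmem g hg
    exact hlc j
  · intro g hg g' hg' hne' d hd
    obtain ⟨j, rfl⟩ := hmem g hg
    obtain ⟨j', rfl⟩ := hmem g' hg'
    have hjj : j' ≠ j := fun h => hne' (by rw [h])
    rw [hlm j']
    have hdmem : d ∈ ({(if j = i then Finsupp.single i 2 else Finsupp.single j 1),
        Finsupp.single i 1, (0 : Fin n →₀ ℕ)} : Finset _) := by
      unfold gen at hd
      by_cases hji : j = i
      · rw [if_pos hji] at hd ⊢
        exact supp_quad P Q i hd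
      · rw [if_neg hji] at hd ⊢
        exact supp_lin P Q i j hd
    simp only [Finset.mem_insert, Finset.mem_singleton] at hdmem
    by_cases hj'i : j' = i
    · rw [if_pos hj'i]
      rcases hdmem with rfl | rfl | rfl
      · by_cases hji : j = i
        · exact absurd (hj'i.trans hji.symm) hjj
        · rw [if_neg hji]
          exact not_single_le (Or.inr ⟨fun h => hji h.symm, two_ne_zero⟩)
      · exact not_single_le (Or.inl one_lt_two)
      · exact not_single_le_zero two_ne_zero
    · rw [if_neg hj'i]
      rcases hdmem with rfl | rfl | rfl
      · by_cases hji : j = i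
        · rw [if_pos hji]
          exact not_single_le (Or.inr ⟨hj'i, one_ne_zero⟩)
        · rw [if_neg hji]
          exact not_single_le (Or.inr ⟨hjj, one_ne_zero⟩)
      · exact not_single_le (Or.inr ⟨hj'i, one_ne_zero⟩)
      · exact not_single_le_zero one_ne_zero

end soundness

section evalhelpers

lemma eval_pairP (i : Fin n) (b a : K) (s : Fin n → K) :
    eval s ((monomial (Finsupp.single i 1)) b + (monomial 0) a) = b * s i + a := by
  simp [eval_monomial, Finsupp.prod_single_index]

lemma eval_tri1 (j i : Fin n) (u v w : K) (s : Fin n → K) :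
    eval s ((monomial (Finsupp.single j 1)) u + (monomial (Finsupp.single i 1)) v
      + (monomial 0) w) = u * s j + v * s i + w := by
  simp [eval_monomial, Finsupp.prod_single_index]

lemma eval_tri2 (i : Fin n) (u v w : K) (s : Fin n → K) :
    eval s ((monomial (Finsupp.single i 2)) u + (monomial (Finsupp.single i 1)) v
      + (monomial 0) w) = u * s i ^ 2 + v * s i + w := by
  simp [eval_monomial, Finsupp.prod_single_index]
  try ring

lemma supp_pair (i : Fin n) (b a : K) :
    ((monomial (Finsupp.single i 1)) b + (monomial 0) a :
      MvPolynomial (Fin n) K).support ⊆ {Finsupp.single i 1, 0} := by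
  classical
  intro d hd
  have h1 := MvPolynomial.support_add hd
  simp only [Finset.mem_union] at h1
  rcases h1 with h1 | h1
  · have := supp_monomial_sub _ _ h1
    simp only [Finset.mem_singleton] at this
    simp [this]
  · have := supp_monomial_sub _ _ h1
    simp only [Finset.mem_singleton] at this
    simp [this]

lemma coeff_pair (i : Fin n) (b a : K) :
    ((monomial (Finsupp.single i 1)) b + (monomial 0) a :
      MvPolynomial (Fin n) K).coeff (Finsupp.single i 1) = b := by
  classical
  rw [MvPolynomial.coeff_add, MvPolynomial.coeff_monomial, MvPolynomial.coeff_monomial,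
    if_pos rfl, if_neg (Ne.symm (sne_zero i one_ne_zero))]
  ring

lemma supp_single_char {μ : Fin n →₀ ℕ} {i : Fin n} (h : ∀ k ∈ μ.support, k = i) :
    μ = Finsupp.single i (μ i) := by
  ext a
  rcases eq_or_ne a i with rfl | ha
  · simp
  · rw [Finsupp.single_eq_of_ne' (Ne.symm ha)]
    by_contra hne
    exact ha (h a (Finsupp.mem_support_iff.mpr hne))

end evalhelpers

section completeness

variable {P Q : Fin n → K}

theorem completeness (hPQ : P ≠ Q) {m : MonomialOrder (Fin n)}
    {G : Finset (MvPolynomial (Fin n) K)}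
    (h : IsReducedGroebnerBasis m (vanishingIdeal K ({P, Q} : Set (Fin n → K))) G) :
    ∃ i, P i ≠ Q i ∧ G = GBset P Q i := by
  classical
  obtain ⟨⟨hG0, hGI, hGB⟩, hlc, hred⟩ := h
  have hmemI : ∀ g ∈ G, g ∈ vanishingIdeal K ({P, Q} : Set (Fin n → K)) :=
    fun g hg => hGI (Finset.mem_coe.mpr hg)
  -- constants in the ideal are zero
  have hconst : ∀ f : MvPolynomial (Fin n) K, f.support ⊆ {0} →
      f ∈ vanishingIdeal K ({P, Q} : Set (Fin n → K)) → f = 0 := by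
    intro f hs hfI
    have hrepr := repr_subset (s := ({0} : Finset (Fin n →₀ ℕ))) hs
    rw [Finset.sum_singleton] at hrepr
    have he := ((mem_two P Q).mp hfI).1
    rw [hrepr] at he ⊢
    simp only [eval_monomial, Finsupp.prod_zero_index, mul_one] at he
    rw [he]
    simp
  have lm_ne_zero : ∀ g ∈ G, leadMon m g ≠ 0 := by
    intro g hg h0
    apply hG0 g hg
    apply hconst g ?_ (hmemI g hg)
    intro d hd
    have h1 := le_leadMon m hd
    rw [h0] at h1
    have h2 := syn_zero_le m d
    have hd0 : d = 0 := m.toSyn.injective (le_antisymm h1 h2)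
    simp [hd0]
  have hstd0 : ∀ g ∈ G, ¬ leadMon m g ≤ 0 :=
    fun g hg hle => lm_ne_zero g hg (fle_zero hle)
  have std_dcl : ∀ μ ν : Fin n →₀ ℕ, (∀ g ∈ G, ¬ leadMon m g ≤ μ) → ν ≤ μ →
      (∀ g ∈ G, ¬ leadMon m g ≤ ν) :=
    fun μ ν hμ hle g hg hle2 => hμ g hg (le_trans hle2 hle)
  have no_std_poly : ∀ f ∈ vanishingIdeal K ({P, Q} : Set (Fin n → K)), f ≠ 0 →
      ¬ (∀ d ∈ f.support, ∀ g ∈ G, ¬ leadMon m g ≤ d) := by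
    intro f hfI hf0 hall
    obtain ⟨g, hg, hle⟩ := hGB f hfI hf0
    exact hall _ (leadMon_mem_support m hf0) g hg hle
  have tail_std : ∀ g ∈ G, ∀ d ∈ g.support, d ≠ leadMon m g →
      ∀ g' ∈ G, ¬ leadMon m g' ≤ d := by
    intro g hg d hd hne g' hg' hle
    by_cases hgg : g' = g
    · subst hgg
      apply hne
      have h1 := m.toSyn_monotone hle
      have h2 := le_leadMon m hd
      exact m.toSyn.injective (le_antisymm h2 h1)
    · exact hred g hg g' hg' hgg d hd hle
  have unit_std_ne : ∀ i : Fin n, (∀ g ∈ G, ¬ leadMon m g ≤ Finsupp.single i 1) →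
      P i ≠ Q i := by
    intro i hstd heq
    set f : MvPolynomial (Fin n) K :=
      (monomial (Finsupp.single i 1)) (1 : K) + (monomial 0) (-(P i)) with hfdef
    have hfI : f ∈ vanishingIdeal K ({P, Q} : Set (Fin n → K)) := by
      rw [mem_two]
      rw [hfdef, eval_pairP, eval_pairP]
      constructor
      · ring
      · rw [← heq]; ring
    have hf0 : f ≠ 0 := by
      intro h0
      have := coeff_pair i (1 : K) (-(P i))
      rw [← hfdef, h0] at this
      simp at this
    apply no_std_poly f hfI hf0
    intro d hd
    have hdm := supp_pair i (1 : K) (-(P i)) (by rw [hfdef] at hd; exact hd)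
    simp only [Finset.mem_insert, Finset.mem_singleton] at hdm
    rcases hdm with rfl | rfl
    · exact hstd
    · exact hstd0
  have hq2 : ∀ i : Fin n, ¬ (∀ g ∈ G, ¬ leadMon m g ≤ Finsupp.single i 2) := by
    intro i h2
    apply no_std_poly (quad P Q i) (quad_mem P Q i) (quad_ne_zero P Q i)
    intro d hd
    have hdm := supp_quad P Q i hd
    simp only [Finset.mem_insert, Finset.mem_singleton] at hdm
    rcases hdm with rfl | rfl | rfl
    · exact h2
    · exact std_dcl _ _ h2 (Finsupp.single_le_iff.mpr (by simp))
    · exact hstd0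
  have unit_unique : ∀ a b : Fin n, (∀ g ∈ G, ¬ leadMon m g ≤ Finsupp.single a 1) →
      (∀ g ∈ G, ¬ leadMon m g ≤ Finsupp.single b 1) → a = b := by
    intro a b hsa hsb
    by_contra hab
    have ha := unit_std_ne a hsa
    apply no_std_poly (lin P Q a b) (lin_mem P Q ha b) (lin_ne_zero P Q a (Ne.symm hab))
    intro d hd
    have hdm := supp_lin P Q a b hd
    simp only [Finset.mem_insert, Finset.mem_singleton] at hdm
    rcases hdm with rfl | rfl | rfl
    · exact hsb
    · exact hsa
    · exact hstd0
  have exists_unit : ∃ i : Fin n, ∀ g ∈ G, ¬ leadMon m g ≤ Finsupp.single i 1 := by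
    by_contra hnone
    push_neg at hnone
    apply hPQ
    funext i
    obtain ⟨g, hg, hle⟩ := hnone i
    obtain ⟨c, hc, hgc⟩ := le_single hle
    have hc0 : c ≠ 0 := by
      rintro rfl
      exact lm_ne_zero g hg (by simpa using hgc)
    have hc1 : c = 1 := by omega
    rw [hc1] at hgc
    have hsupp : g.support ⊆ {Finsupp.single i 1, 0} := by
      intro d hd
      by_cases hdl : d = leadMon m g
      · simp [hdl, hgc]
      · have htail := tail_std g hg d hd hdl
        have hd0 : d = 0 := by
          by_contra hdne
          obtain ⟨k, hk⟩ := Finsupp.support_nonempty_iff.mpr hdne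
          have h1 : Finsupp.single k 1 ≤ d := Finsupp.single_le_iff.mpr (by
            have := Finsupp.mem_support_iff.mp hk
            omega)
          obtain ⟨g', hg', hle'⟩ := hnone k
          exact htail g' hg' (le_trans hle' h1)
        simp [hd0]
    have hrepr := repr_pair (sne_zero i one_ne_zero) hsupp
    have hb : g.coeff (Finsupp.single i 1) = 1 := by
      have hh := hlc g hg
      unfold leadCoeff at hh
      rw [hgc] at hh
      exact hh
    obtain ⟨he1, he2⟩ := (mem_two P Q).mp (hmemI g hg)
    rw [hrepr, eval_pairP] at he1 he2
    rw [hb] at he1 he2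
    linear_combination he1 - he2
  obtain ⟨i, hiStd⟩ := exists_unit
  have hi : P i ≠ Q i := unit_std_ne i hiStd
  have std_char : ∀ μ : Fin n →₀ ℕ, (∀ g ∈ G, ¬ leadMon m g ≤ μ) →
      μ = 0 ∨ μ = Finsupp.single i 1 := by
    intro μ hμ
    by_cases h0 : μ = 0
    · exact Or.inl h0
    right
    have hsupp_i : ∀ k ∈ μ.support, k = i := by
      intro k hk
      have h1 : Finsupp.single k 1 ≤ μ := Finsupp.single_le_iff.mpr (by
        have := Finsupp.mem_support_iff.mp hk
        omega)
      exact unit_unique k i (std_dcl _ _ hμ h1) hiStd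
    have hform := supp_single_char hsupp_i
    have hμi1 : μ i ≤ 1 := by
      by_contra hgt
      have h2 : Finsupp.single i 2 ≤ μ := by
        rw [hform]
        exact Finsupp.single_le_iff.mpr (by simpa using (by omega : 2 ≤ μ i))
      exact hq2 i (std_dcl _ _ hμ h2)
    have hμi0 : μ i ≠ 0 := by
      intro hz
      apply h0
      rw [hform, hz]
      simp
    have : μ i = 1 := by omega
    rw [hform, this]
  have pin_lin : ∀ g ∈ G, ∀ j : Fin n, j ≠ i → leadMon m g = Finsupp.single j 1 →
      g = lin P Q i j := by
    intro g hg j hji hlmg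
    have hsupp : g.support ⊆ {Finsupp.single j 1, Finsupp.single i 1, 0} := by
      intro d hd
      by_cases hdl : d = leadMon m g
      · simp [hdl, hlmg]
      · rcases std_char d (tail_std g hg d hd hdl) with rfl | rfl
        · simp
        · simp
    have hrepr := repr_triple (sne_single' hji one_ne_zero) (sne_zero j one_ne_zero)
      (sne_zero i one_ne_zero) hsupp
    have hc1 : g.coeff (Finsupp.single j 1) = 1 := by
      have hh := hlc g hg
      unfold leadCoeff at hh
      rw [hlmg] at hh
      exact hh
    obtain ⟨he1, he2⟩ := (mem_two P Q).mp (hmemI g hg)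
    rw [hrepr, eval_tri1] at he1 he2
    rw [hc1] at he1 he2
    have hd : Q i - P i ≠ 0 := sub_ne_zero.mpr (Ne.symm hi)
    have hc2 : g.coeff (Finsupp.single i 1) = -((Q j - P j) * (Q i - P i)⁻¹) := by
      have hmul : g.coeff (Finsupp.single i 1) * (Q i - P i) = -(Q j - P j) := by
        linear_combination he2 - he1
      field_simp
      linear_combination hmul
    have hc3 : g.coeff 0 = -(P j - (Q j - P j) * (Q i - P i)⁻¹ * P i) := by
      linear_combination he1 - P i * hc2
    rw [hrepr, hc1, hc2, hc3]
    rfl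
  have pin_quad : ∀ g ∈ G, leadMon m g = Finsupp.single i 2 → g = quad P Q i := by
    intro g hg hlmg
    have hsupp : g.support ⊆ {Finsupp.single i 2, Finsupp.single i 1, 0} := by
      intro d hd
      by_cases hdl : d = leadMon m g
      · simp [hdl, hlmg]
      · rcases std_char d (tail_std g hg d hd hdl) with rfl | rfl
        · simp
        · simp
    have hrepr := repr_triple (sne_single (by norm_num) (Or.inr rfl))
      (sne_zero i two_ne_zero) (sne_zero i one_ne_zero) hsupp
    have hc1 : g.coeff (Finsupp.single i 2) = 1 := by
      have hh := hlc g hg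
      unfold leadCoeff at hh
      rw [hlmg] at hh
      exact hh
    obtain ⟨he1, he2⟩ := (mem_two P Q).mp (hmemI g hg)
    rw [hrepr, eval_tri2] at he1 he2
    rw [hc1] at he1 he2
    have hd' : P i - Q i ≠ 0 := sub_ne_zero.mpr hi
    have hc2 : g.coeff (Finsupp.single i 1) = -(P i + Q i) := by
      apply mul_right_cancel₀ hd'
      linear_combination he1 - he2
    have hc3 : g.coeff 0 = P i * Q i := by
      linear_combination he1 - P i * hc2
    rw [hrepr, hc1, hc2, hc3]
    rfl
  refine ⟨i, hi, ?_⟩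
  have hquadG : quad P Q i ∈ G := by
    obtain ⟨g, hg, hle⟩ := hGB (quad P Q i) (quad_mem P Q i) (quad_ne_zero P Q i)
    have hlmqmem := supp_quad P Q i (leadMon_mem_support m (quad_ne_zero P Q i))
    simp only [Finset.mem_insert, Finset.mem_singleton] at hlmqmem
    have hlmq : leadMon m (quad P Q i) = Finsupp.single i 2 := by
      rcases hlmqmem with hh | hh | hh
      · exact hh
      · exfalso
        apply hiStd g hg
        rw [← hh]
        exact hle
      · exfalso
        apply hstd0 g hg
        rw [← hh]
        exact hle
    rw [hlmq] at hle
    obtain ⟨c, hc, hgc⟩ := le_single hle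
    have hc0 : c ≠ 0 := fun h0 => lm_ne_zero g hg (by simp [hgc, h0])
    have hcne1 : c ≠ 1 := by
      intro h1
      exact hiStd g hg (le_of_eq (by rw [hgc, h1]))
    have hc2 : c = 2 := by omega
    have hfin := pin_quad g hg (by rw [hgc, hc2])
    rwa [hfin] at hg
  have hlinG : ∀ j : Fin n, j ≠ i → lin P Q i j ∈ G := by
    intro j hji
    obtain ⟨g, hg, hle⟩ := hGB (lin P Q i j) (lin_mem P Q hi j) (lin_ne_zero P Q i hji)
    have hlmlmem := supp_lin P Q i j (leadMon_mem_support m (lin_ne_zero P Q i hji))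
    simp only [Finset.mem_insert, Finset.mem_singleton] at hlmlmem
    have hlml : leadMon m (lin P Q i j) = Finsupp.single j 1 := by
      rcases hlmlmem with hh | hh | hh
      · exact hh
      · exfalso
        apply hiStd g hg
        rw [← hh]
        exact hle
      · exfalso
        apply hstd0 g hg
        rw [← hh]
        exact hle
    rw [hlml] at hle
    obtain ⟨c, hc, hgc⟩ := le_single hle
    have hc0 : c ≠ 0 := fun h0 => lm_ne_zero g hg (by simp [hgc, h0])
    have hc1 : c = 1 := by omega
    have hfin := pin_lin g hg j hji (by rw [hgc, hc1])
    rwa [hfin] at hg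
  have lm_cases : ∀ g ∈ G, ∃ j, g = gen P Q i j := by
    intro g hg
    by_cases hk : ∃ k ∈ (leadMon m g).support, k ≠ i
    · obtain ⟨k, hkm, hki⟩ := hk
      have h1 : Finsupp.single k 1 ≤ leadMon m g := Finsupp.single_le_iff.mpr (by
        have := Finsupp.mem_support_iff.mp hkm
        omega)
      have hknotstd : ¬ ∀ g' ∈ G, ¬ leadMon m g' ≤ Finsupp.single k 1 :=
        fun hstd => hki (unit_unique k i hstd hiStd)
      push_neg at hknotstd
      obtain ⟨g', hg', hle'⟩ := hknotstd
      have hgg : g' = g := by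
        by_contra hne
        exact hred g hg g' hg' hne (leadMon m g) (leadMon_mem_support m (hG0 g hg))
          (le_trans hle' h1)
      subst hgg
      obtain ⟨c, hc, hgc⟩ := le_single hle'
      have hc0 : c ≠ 0 := fun h0 => lm_ne_zero g' hg' (by simp [hgc, h0])
      have hc1 : c = 1 := by omega
      refine ⟨k, ?_⟩
      rw [gen, if_neg hki]
      exact pin_lin g' hg' k hki (by rw [hgc, hc1])
    · push_neg at hk
      have hform := supp_single_char hk
      have hc0 : (leadMon m g) i ≠ 0 := by
        intro hz
        apply lm_ne_zero g hg
        rw [hform, hz]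
        simp
      have hcne1 : (leadMon m g) i ≠ 1 := by
        intro h1
        apply hiStd g hg
        rw [hform, h1]
      have hnotstd2 := hq2 i
      push_neg at hnotstd2
      obtain ⟨g', hg', hle'⟩ := hnotstd2
      have h2le : Finsupp.single i 2 ≤ leadMon m g := by
        rw [hform]
        exact Finsupp.single_le_iff.mpr (by simpa using (by omega : 2 ≤ (leadMon m g) i))
      have hgg : g' = g := by
        by_contra hne
        exact hred g hg g' hg' hne (leadMon m g) (leadMon_mem_support m (hG0 g hg))
          (le_trans hle' h2le)
      subst hgg
      have h2c := Finsupp.single_le_iff.mp h2le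
      have hub : (leadMon m g') i ≤ 2 := by
        have := Finsupp.le_def.mp hle' i
        simpa using this
      have hlm2 : leadMon m g' = Finsupp.single i 2 := by
        rw [hform]
        have heq2 : (leadMon m g') i = 2 := by omega
        rw [heq2]
      refine ⟨i, ?_⟩
      rw [gen, if_pos rfl]
      exact pin_quad g' hg' hlm2
  ext g
  constructor
  · intro hg
    obtain ⟨j, rfl⟩ := lm_cases g hg
    exact Finset.mem_image.mpr ⟨j, Finset.mem_univ j, rfl⟩
  · intro hg
    obtain ⟨j, _, rfl⟩ := Finset.mem_image.mp hg
    rw [gen]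
    by_cases hji : j = i
    · rw [if_pos hji]
      exact hquadG
    · rw [if_neg hji]
      exact hlinG j hji

end completeness

section inj

lemma GBset_inj (P Q : Fin n → K) : Function.Injective (GBset P Q) := by
  classical
  intro a b hab
  by_contra hne
  have hmem : quad P Q a ∈ GBset P Q b := by
    rw [← hab]
    exact Finset.mem_image.mpr ⟨a, Finset.mem_univ a, by rw [gen, if_pos rfl]⟩
  obtain ⟨j, _, hj⟩ := Finset.mem_image.mp hmem
  have hco : (gen P Q b j).coeff (Finsupp.single a 2) = 1 := by
    rw [hj]
    exact coeff_quad P Q a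
  have hsupmem : Finsupp.single a 2 ∈ (gen P Q b j).support :=
    MvPolynomial.mem_support_iff.mpr (by rw [hco]; exact one_ne_zero)
  have : False := by
    unfold gen at hsupmem
    by_cases hjb : j = b
    · rw [if_pos hjb] at hsupmem
      have hh := supp_quad P Q b hsupmem
      simp only [Finset.mem_insert, Finset.mem_singleton] at hh
      rcases hh with hh | hh | hh
      · exact hne ((Finsupp.single_left_inj two_ne_zero).mp hh)
      · exact sne_single (by norm_num) (Or.inl two_ne_zero) hh
      · exact sne_zero a two_ne_zero hh
    · rw [if_neg hjb] at hsupmem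
      have hh := supp_lin P Q b j hsupmem
      simp only [Finset.mem_insert, Finset.mem_singleton] at hh
      rcases hh with hh | hh | hh
      · exact sne_single (by norm_num) (Or.inl two_ne_zero) hh
      · exact sne_single (by norm_num) (Or.inl two_ne_zero) hh
      · exact sne_zero a two_ne_zero hh
  exact this

end inj

end TwoPointGB

/-- For a prime `p`, `n ≥ 1`, and two distinct points `P Q : Fin n → ZMod p`, the number of
distinct reduced Gröbner bases of the vanishing ideal of `{P, Q}` equals the number of
coordinates in which `P` and `Q` differ. -/
theorem num_reduced_GB_two_points (p : ℕ) [Fact p.Prime] (n : ℕ) (hn : 1 ≤ n)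
    (P Q : Fin n → ZMod p) (hPQ : P ≠ Q) :
    numReducedGB (vanishingIdeal (ZMod p) ({P, Q} : Set (Fin n → ZMod p))) =
      (Finset.univ.filter fun i : Fin n => P i ≠ Q i).card := by
  classical
  have hset : {G : Finset (MvPolynomial (Fin n) (ZMod p)) |
      ∃ m : MonomialOrder.{0,0} (Fin n),
        IsReducedGroebnerBasis m (vanishingIdeal (ZMod p) ({P, Q} : Set (Fin n → ZMod p))) G}
      = (TwoPointGB.GBset P Q) '' {i : Fin n | P i ≠ Q i} := by
    ext G
    constructor
    · rintro ⟨m, hm⟩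
      obtain ⟨i, hi, rfl⟩ := TwoPointGB.completeness hPQ hm
      exact ⟨i, hi, rfl⟩
    · rintro ⟨i, hi, rfl⟩
      have htop : ∀ k : Fin n, k ≤ (⟨n - 1, by omega⟩ : Fin n) := by
        intro k
        rw [Fin.le_def]
        have := k.isLt
        simp only []
        omega
      exact ⟨TwoPointGB.mo (Equiv.swap i ⟨n - 1, by omega⟩),
        TwoPointGB.soundness P Q htop hi⟩
  rw [numReducedGB, hset,
    Set.ncard_image_of_injective _ (TwoPointGB.GBset_inj P Q),
    show {i : Fin n | P i ≠ Q i}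
      = ↑(Finset.univ.filter fun i : Fin n => P i ≠ Q i) by ext x; simp,
    Set.ncard_coe_finset]
end

section
/- Let p be a prime, n ≥ 1, and K = ZMod p. For any two distinct points P, Q ∈ (Fin n → K), the vanishing ideal I({P, Q}) has at most n distinct reduced Gröbner bases; moreover this maximum is attained: there exist two distinct points P, Q ∈ (Fin n → K) (for instance the all-zeros point and the all-ones point) such that I({P, Q}) has exactly n distinct reduced Gröbner bases. -/
open MvPolynomial

open Finsupp

section Helpers
variable {n : ℕ} {K : Type*} [Field K]

lemma leadMon_mem_support {m : MonomialOrder (Fin n)} {f : MvPolynomial (Fin n) K} (hf : f ≠ 0) :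
    leadMon m f ∈ f.support := by
  obtain ⟨d, hd, hsup⟩ := Finset.exists_mem_eq_sup f.support
    (MvPolynomial.support_nonempty.mpr hf) (fun d => m.toSyn d)
  rw [leadMon, hsup]
  simpa using hd

lemma le_toSyn_leadMon {m : MonomialOrder (Fin n)} {f : MvPolynomial (Fin n) K} {d : Fin n →₀ ℕ}
    (hd : d ∈ f.support) : m.toSyn d ≤ m.toSyn (leadMon m f) := by
  rw [leadMon, AddEquiv.apply_symm_apply]
  exact Finset.le_sup hd

lemma leadMon_eq_of {m : MonomialOrder (Fin n)} {f : MvPolynomial (Fin n) K} {d : Fin n →₀ ℕ}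
    (hd : d ∈ f.support) (h : ∀ d' ∈ f.support, m.toSyn d' ≤ m.toSyn d) : leadMon m f = d := by
  have : f.support.sup (fun d => m.toSyn d) = m.toSyn d :=
    le_antisymm (Finset.sup_le h) (Finset.le_sup hd)
  rw [leadMon, this]; simp

lemma eq_C_of_leadMon_zero {m : MonomialOrder (Fin n)} {f : MvPolynomial (Fin n) K}
    (h : leadMon m f = 0) : f = C (f.coeff 0) := by
  have hsub : f.support ⊆ {0} := by
    intro d hd
    have h1 := le_toSyn_leadMon (m := m) hd
    rw [h, map_zero] at h1
    have h2 : m.toSyn d = 0 := le_antisymm h1 (by simpa using m.toSyn_monotone (zero_le d))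
    have : d = 0 := m.toSyn.injective (by rw [h2, map_zero])
    simp [this]
  calc f = ∑ d ∈ f.support, monomial d (f.coeff d) := MvPolynomial.as_sum f
    _ = ∑ d ∈ ({0} : Finset (Fin n →₀ ℕ)), monomial d (f.coeff d) :=
        Finset.sum_subset hsub (fun x _ hx => by
          rw [MvPolynomial.notMem_support_iff.mp hx, map_zero])
    _ = C (f.coeff 0) := by rw [Finset.sum_singleton, MvPolynomial.monomial_zero']

lemma eq_sum_of_support_subset {f : MvPolynomial (Fin n) K} {s : Finset (Fin n →₀ ℕ)}
    (h : f.support ⊆ s) : f = ∑ d ∈ s, monomial d (f.coeff d) := by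
  calc f = ∑ d ∈ f.support, monomial d (f.coeff d) := MvPolynomial.as_sum f
    _ = ∑ d ∈ s, monomial d (f.coeff d) :=
        Finset.sum_subset h (fun x _ hx => by
          rw [MvPolynomial.notMem_support_iff.mp hx, map_zero])

end Helpers

section FinsuppHelpers
variable {n : ℕ}

lemma le_single_cases {d : Fin n →₀ ℕ} {i : Fin n} {k : ℕ} (h : d ≤ Finsupp.single i k) :
    d = Finsupp.single i (d i) ∧ d i ≤ k := by
  rw [Finsupp.le_def] at h
  constructor
  · ext j
    rcases eq_or_ne j i with rfl | hj
    · simp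
    · have := h j
      rw [Finsupp.single_apply, if_neg (by exact fun hh => hj hh.symm)] at this
      simp [Finsupp.single_apply, if_neg (fun hh : i = j => hj hh.symm), Nat.le_zero.mp this]
  · simpa using h i

lemma eq_zero_or_single_of_le_single_one {d : Fin n →₀ ℕ} {i : Fin n}
    (h : d ≤ Finsupp.single i 1) : d = 0 ∨ d = Finsupp.single i 1 := by
  obtain ⟨h1, h2⟩ := le_single_cases h
  interval_cases hdi : d i
  · left; simpa using h1
  · right; simpa using h1

lemma le_single_two_cases {d : Fin n →₀ ℕ} {i : Fin n}
    (h : d ≤ Finsupp.single i 2) :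
    d = 0 ∨ d = Finsupp.single i 1 ∨ d = Finsupp.single i 2 := by
  obtain ⟨h1, h2⟩ := le_single_cases h
  interval_cases hdi : d i
  · left; simpa using h1
  · right; left; simpa using h1
  · right; right; simpa using h1

lemma exists_single_le_of_ne_zero {d : Fin n →₀ ℕ} (h : d ≠ 0) :
    ∃ j, Finsupp.single j 1 ≤ d := by
  obtain ⟨j, hj⟩ := Finsupp.ne_iff.mp h
  exact ⟨j, Finsupp.single_le_iff.mpr (by simpa using Nat.one_le_iff_ne_zero.mpr (by simpa using hj))⟩

lemma eq_single_self_of_eq_zero_off {d : Fin n →₀ ℕ} {i : Fin n}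
    (h : ∀ j, j ≠ i → d j = 0) : d = Finsupp.single i (d i) := by
  ext j
  rcases eq_or_ne j i with rfl | hj
  · simp
  · rw [h j hj, Finsupp.single_apply, if_neg (fun hh : i = j => hj hh.symm)]

lemma single_one_ne_single_two {i j : Fin n} : Finsupp.single i 1 ≠ Finsupp.single j 2 := by
  intro h
  rcases (Finsupp.single_eq_single_iff _ _ _ _).mp h with ⟨_, h2⟩ | ⟨h1, _⟩ <;> omega

lemma single_one_injective {i j : Fin n} (h : Finsupp.single i (1:ℕ) = Finsupp.single j 1) :
    i = j := by
  rcases (Finsupp.single_eq_single_iff _ _ _ _).mp h with ⟨h1, _⟩ | ⟨h1, _⟩ <;> omega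

end FinsuppHelpers

/-- Transport of a monomial order along an equivalence of variables. -/
noncomputable def MonomialOrder.comap {σ τ : Type} (m : MonomialOrder σ) (e : τ ≃ σ) :
    MonomialOrder τ where
  syn := m.syn
  toSyn := (Finsupp.domCongr e).trans m.toSyn
  toSyn_monotone := by
    intro a b h
    refine m.toSyn_monotone ?_
    rw [Finsupp.le_def]
    intro s
    simpa [Finsupp.domCongr_apply] using h (e.symm s)

section OrderI
variable {n : ℕ}

/-- A top element of `Fin n`, given some inhabitant. -/
noncomputable def topOf (i : Fin n) : Fin n :=
  (Finset.univ : Finset (Fin n)).max' ⟨i, Finset.mem_univ i⟩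

lemma le_topOf (i j : Fin n) : j ≤ topOf i :=
  Finset.le_max' _ j (Finset.mem_univ j)

/-- A monomial order on `Fin n` for which `X i` is the smallest variable. -/
noncomputable def ordI (i : Fin n) : MonomialOrder (Fin n) :=
  (MonomialOrder.lex (σ := Fin n)).comap (Equiv.swap i (topOf i))

lemma ordI_toSyn_single (i : Fin n) :
    (ordI i).toSyn (Finsupp.single i 1) =
      (MonomialOrder.lex (σ := Fin n)).toSyn (Finsupp.single (topOf i) 1) := by
  show (MonomialOrder.lex (σ := Fin n)).toSyn ((Finsupp.domCongr (Equiv.swap i (topOf i))) (Finsupp.single i 1)) = _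
  congr 1
  ext j
  simp [Finsupp.domCongr_apply, Finsupp.equivMapDomain_single]

lemma lex_lt_single_top {t : Fin n} (ht : ∀ j, j ≤ t) {d : Fin n →₀ ℕ}
    (h : toLex d < toLex (Finsupp.single t 1)) : d = 0 := by
  obtain ⟨k, hk1, hk2⟩ := Finsupp.Lex.lt_iff.mp h
  simp only [ofLex_toLex] at hk1 hk2
  have hkt : k = t := by
    by_contra hne
    rw [Finsupp.single_apply, if_neg (fun hh : t = k => hne hh.symm)] at hk2
    exact absurd hk2 (Nat.not_lt_zero _)
  subst hkt
  ext j
  rcases lt_or_eq_of_le (ht j) with hj | hj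
  · have := hk1 j hj
    rw [Finsupp.single_apply, if_neg (fun hh : k = j => absurd hh.symm (ne_of_lt hj))] at this
    simpa using this
  · subst hj
    rw [Finsupp.single_apply, if_pos rfl] at hk2
    simp only [Finsupp.coe_zero, Pi.zero_apply]
    omega

/-- The key property: the only monomial strictly below `X i` for `ordI i` is `1`. -/
lemma ordI_min {i : Fin n} {d : Fin n →₀ ℕ}
    (h : (ordI i).toSyn d < (ordI i).toSyn (Finsupp.single i 1)) : d = 0 := by
  rw [ordI_toSyn_single] at h
  have h2 : toLex ((Finsupp.domCongr (Equiv.swap i (topOf i))) d)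
      < toLex (Finsupp.single (topOf i) 1) := h
  have := lex_lt_single_top (le_topOf i) h2
  have : (Finsupp.domCongr (Equiv.swap i (topOf i))) d = 0 := this
  simpa using (Finsupp.domCongr (Equiv.swap i (topOf i))).injective (by simpa using this)

end OrderI

section Polys
variable {n : ℕ} {K : Type*} [Field K]

noncomputable def aa (P Q : Fin n → K) (i j : Fin n) : K := (P j - Q j) / (P i - Q i)

noncomputable def gLin (P Q : Fin n → K) (i j : Fin n) : MvPolynomial (Fin n) K :=
  monomial (Finsupp.single j 1) 1 + monomial (Finsupp.single i 1) (-(aa P Q i j))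
    + C (aa P Q i j * P i - P j)

noncomputable def gQuad (P Q : Fin n → K) (i : Fin n) : MvPolynomial (Fin n) K :=
  monomial (Finsupp.single i 2) 1 + monomial (Finsupp.single i 1) (-(P i + Q i)) + C (P i * Q i)

noncomputable def GBset (P Q : Fin n → K) (i : Fin n) : Finset (MvPolynomial (Fin n) K) :=
  letI := Classical.decEq (MvPolynomial (Fin n) K)
  Finset.image (fun j => if j = i then gQuad P Q i else gLin P Q i j) Finset.univ

lemma support_triple {d1 d2 : Fin n →₀ ℕ} {c1 c2 c3 : K} :
    (monomial d1 c1 + monomial d2 c2 + C c3).support ⊆ {d1, d2, 0} := by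
  refine (MvPolynomial.support_add).trans ?_
  intro d hd
  rcases Finset.mem_union.mp hd with hd | hd
  · rcases Finset.mem_union.mp (MvPolynomial.support_add hd) with hd | hd
    · have := MvPolynomial.support_monomial_subset hd
      simp_all
    · have := MvPolynomial.support_monomial_subset hd
      simp_all
  · have hC : (C c3 : MvPolynomial (Fin n) K).support ⊆ {0} := by
      rw [← MvPolynomial.monomial_zero']
      exact MvPolynomial.support_monomial_subset
    have := hC hd
    simp_all

lemma support_gLin (P Q : Fin n → K) (i j : Fin n) :
    (gLin P Q i j).support ⊆ {Finsupp.single j 1, Finsupp.single i 1, 0} := support_triple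

lemma support_gQuad (P Q : Fin n → K) (i : Fin n) :
    (gQuad P Q i).support ⊆ {Finsupp.single i 2, Finsupp.single i 1, 0} := support_triple

lemma coeff_gLin_lead {P Q : Fin n → K} {i j : Fin n} (hij : j ≠ i) :
    (gLin P Q i j).coeff (Finsupp.single j 1) = 1 := by
  have h1 : ¬ (i = j) := fun h => hij h.symm
  have h2 : (0 : Fin n →₀ ℕ) ≠ Finsupp.single j 1 :=
    fun h => one_ne_zero (Finsupp.single_eq_zero.mp h.symm)
  simp [gLin, coeff_monomial, coeff_C, Finsupp.single_eq_single_iff, h1, h2]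

lemma coeff_gQuad_lead {P Q : Fin n → K} {i : Fin n} :
    (gQuad P Q i).coeff (Finsupp.single i 2) = 1 := by
  have h2 : (0 : Fin n →₀ ℕ) ≠ Finsupp.single i 2 :=
    fun h => two_ne_zero (Finsupp.single_eq_zero.mp h.symm)
  simp [gQuad, coeff_monomial, coeff_C,
    (single_one_ne_single_two : Finsupp.single i (1:ℕ) ≠ Finsupp.single i 2), h2]

lemma eval_gLin_P (P Q : Fin n → K) (i j : Fin n) : eval P (gLin P Q i j) = 0 := by
  simp [gLin, eval_monomial, Finsupp.prod_single_index]
  ring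

lemma eval_gLin_Q {P Q : Fin n → K} {i : Fin n} (hi : P i ≠ Q i) (j : Fin n) :
    eval Q (gLin P Q i j) = 0 := by
  have h0 : P i - Q i ≠ 0 := sub_ne_zero.mpr hi
  simp [gLin, eval_monomial, Finsupp.prod_single_index, aa]
  field_simp
  ring

lemma eval_gQuad_P (P Q : Fin n → K) (i : Fin n) : eval P (gQuad P Q i) = 0 := by
  simp [gQuad, eval_monomial, Finsupp.prod_single_index]
  ring

lemma eval_gQuad_Q (P Q : Fin n → K) (i : Fin n) : eval Q (gQuad P Q i) = 0 := by
  simp [gQuad, eval_monomial, Finsupp.prod_single_index]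
  ring

end Polys



section Construction
variable {n : ℕ} {K : Type*} [Field K]

lemma toSyn_zero_le (m : MonomialOrder (Fin n)) (d : Fin n →₀ ℕ) : m.toSyn 0 ≤ m.toSyn d :=
  m.toSyn_monotone (zero_le : 0 ≤ d)

lemma ordI_single_lt {i j : Fin n} (hij : j ≠ i) :
    (ordI i).toSyn (Finsupp.single i 1) < (ordI i).toSyn (Finsupp.single j 1) := by
  rcases lt_trichotomy ((ordI i).toSyn (Finsupp.single j 1))
    ((ordI i).toSyn (Finsupp.single i 1)) with h | h | h
  · exact absurd (ordI_min h) (fun hh => one_ne_zero (Finsupp.single_eq_zero.mp hh))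
  · exact absurd (single_one_injective ((ordI i).toSyn.injective h)) hij
  · exact h

lemma leadMon_gLin {P Q : Fin n → K} {i j : Fin n} (hij : j ≠ i) :
    leadMon (ordI i) (gLin P Q i j) = Finsupp.single j 1 := by
  apply leadMon_eq_of
  · rw [MvPolynomial.mem_support_iff, coeff_gLin_lead hij]; exact one_ne_zero
  · intro d hd
    have := support_gLin P Q i j hd
    simp only [Finset.mem_insert, Finset.mem_singleton] at this
    rcases this with rfl | rfl | rfl
    · exact le_refl _
    · exact le_of_lt (ordI_single_lt hij)
    · exact toSyn_zero_le _ _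

lemma leadMon_gQuad {P Q : Fin n → K} {i : Fin n} :
    leadMon (ordI i) (gQuad P Q i) = Finsupp.single i 2 := by
  apply leadMon_eq_of
  · rw [MvPolynomial.mem_support_iff, coeff_gQuad_lead]; exact one_ne_zero
  · intro d hd
    have := support_gQuad P Q i hd
    simp only [Finset.mem_insert, Finset.mem_singleton] at this
    rcases this with rfl | rfl | rfl
    · exact le_refl _
    · exact le_of_lt ((ordI i).toSyn_strictMono
        (lt_of_le_of_ne (Finsupp.single_le_iff.mpr (by simp)) single_one_ne_single_two))
    · exact toSyn_zero_le _ _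

lemma gLin_ne_zero {P Q : Fin n → K} {i j : Fin n} (hij : j ≠ i) : gLin P Q i j ≠ 0 :=
  fun h => one_ne_zero (by rw [← coeff_gLin_lead (P := P) (Q := Q) hij, h, MvPolynomial.coeff_zero])

lemma gQuad_ne_zero {P Q : Fin n → K} {i : Fin n} : gQuad P Q i ≠ 0 :=
  fun h => one_ne_zero (by rw [← coeff_gQuad_lead (P := P) (Q := Q) (i := i), h, MvPolynomial.coeff_zero])

lemma gQuad_mem {P Q : Fin n → K} {i : Fin n} : gQuad P Q i ∈ GBset P Q i := by
  classical
  simp only [GBset, Finset.mem_image]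
  exact ⟨i, Finset.mem_univ i, by simp⟩

lemma gLin_mem {P Q : Fin n → K} {i j : Fin n} (hij : j ≠ i) : gLin P Q i j ∈ GBset P Q i := by
  classical
  simp only [GBset, Finset.mem_image]
  exact ⟨j, Finset.mem_univ j, by simp [hij]⟩

lemma mem_GBset {P Q : Fin n → K} {i : Fin n} {x : MvPolynomial (Fin n) K}
    (hx : x ∈ GBset P Q i) : x = gQuad P Q i ∨ ∃ j, j ≠ i ∧ x = gLin P Q i j := by
  classical
  simp only [GBset, Finset.mem_image] at hx
  obtain ⟨j, -, rfl⟩ := hx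
  by_cases hj : j = i
  · left; simp [hj]
  · right; exact ⟨j, hj, by simp [hj]⟩

lemma gLin_mem_I {P Q : Fin n → K} {i : Fin n} (hi : P i ≠ Q i) (j : Fin n) :
    gLin P Q i j ∈ vanishingIdeal K ({P, Q} : Set (Fin n → K)) := by
  rw [MvPolynomial.mem_vanishingIdeal_iff]
  intro x hx
  rcases hx with h | h
  · rw [h]; exact eval_gLin_P P Q i j
  · rw [Set.mem_singleton_iff] at h; rw [h]; exact eval_gLin_Q hi j

lemma gQuad_mem_I {P Q : Fin n → K} {i : Fin n} :
    gQuad P Q i ∈ vanishingIdeal K ({P, Q} : Set (Fin n → K)) := by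
  rw [MvPolynomial.mem_vanishingIdeal_iff]
  intro x hx
  rcases hx with h | h
  · rw [h]; exact eval_gQuad_P P Q i
  · rw [Set.mem_singleton_iff] at h; rw [h]; exact eval_gQuad_Q P Q i

lemma constructed {P Q : Fin n → K} {i : Fin n} (hi : P i ≠ Q i) :
    IsReducedGroebnerBasis (ordI i) (vanishingIdeal K ({P, Q} : Set (Fin n → K))) (GBset P Q i) := by
  refine ⟨⟨?_, ?_, ?_⟩, ?_, ?_⟩
  · intro g hg
    rcases mem_GBset hg with rfl | ⟨j, hj, rfl⟩
    · exact gQuad_ne_zero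
    · exact gLin_ne_zero hj
  · intro g hg
    rcases mem_GBset hg with rfl | ⟨j, hj, rfl⟩
    · exact gQuad_mem_I
    · exact gLin_mem_I hi j
  · -- the Gröbner basis property
    intro f hf hf0
    set d := leadMon (ordI i) f with hd
    by_cases hcase : ∃ j, j ≠ i ∧ 1 ≤ d j
    · obtain ⟨j, hj, hdj⟩ := hcase
      exact ⟨gLin P Q i j, gLin_mem hj, by
        rw [leadMon_gLin hj]; exact Finsupp.single_le_iff.mpr hdj⟩
    · push_neg at hcase
      have hdj0 : ∀ j, j ≠ i → d j = 0 := fun j hj => by have := hcase j hj; omega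
      have hdeq : d = Finsupp.single i (d i) := eq_single_self_of_eq_zero_off hdj0
      rcases Nat.lt_or_ge (d i) 1 with h1 | h1
      · -- leading monomial is 1 : f is a nonzero constant in I, contradiction
        exfalso
        have hz : d = 0 := by rw [hdeq, Nat.lt_one_iff.mp h1, Finsupp.single_zero]
        have hfC : f = MvPolynomial.C (f.coeff 0) := eq_C_of_leadMon_zero (by rw [← hd, hz])
        have hev : MvPolynomial.eval P f = 0 := (MvPolynomial.mem_vanishingIdeal_iff.mp hf) P (by simp)
        rw [hfC] at hev
        rw [MvPolynomial.eval_C] at hev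
        exact hf0 (by rw [hfC, hev, map_zero])
      · rcases Nat.lt_or_ge (d i) 2 with h2 | h2
        · -- leading monomial is X i : f = c • X i + c', contradiction
          exfalso
          have hdi : d i = 1 := by omega
          rw [hdi] at hdeq
          have hsup : f.support ⊆ {Finsupp.single i 1, 0} := by
            intro d' hd'
            rcases eq_or_ne d' d with rfl | hne
            · simp [hdeq]
            · have hle := le_toSyn_leadMon (m := ordI i) hd'
              rw [← hd] at hle
              have hlt : (ordI i).toSyn d' < (ordI i).toSyn d :=
                lt_of_le_of_ne hle (fun h => hne ((ordI i).toSyn.injective h))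
              rw [hdeq] at hlt
              simp [ordI_min hlt]
          have hrep := eq_sum_of_support_subset hsup
          rw [Finset.sum_pair (fun hh => (one_ne_zero (α := ℕ)) (Finsupp.single_eq_zero.mp hh))] at hrep
          have hc : f.coeff d ≠ 0 := MvPolynomial.mem_support_iff.mp (by
            rw [hd]; exact leadMon_mem_support hf0)
          rw [hdeq] at hc
          have hevP : MvPolynomial.eval P f = 0 := (MvPolynomial.mem_vanishingIdeal_iff.mp hf) P (by simp)
          have hevQ : MvPolynomial.eval Q f = 0 := (MvPolynomial.mem_vanishingIdeal_iff.mp hf) Q (by simp)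
          rw [hrep] at hevP hevQ
          simp only [map_add, MvPolynomial.eval_monomial, Finsupp.prod_single_index,
            pow_zero, pow_one, Finsupp.prod_zero_index] at hevP hevQ
          apply hc
          have hsub : f.coeff (Finsupp.single i 1) * (P i - Q i) = 0 := by
            linear_combination hevP - hevQ
          exact (mul_eq_zero.mp hsub).resolve_right (sub_ne_zero.mpr hi)
        · exact ⟨gQuad P Q i, gQuad_mem, by
            rw [leadMon_gQuad, hdeq]; exact Finsupp.single_le_iff.mpr (by simpa using h2)⟩
  · -- leading coefficients are 1
    intro g hg
    rcases mem_GBset hg with rfl | ⟨j, hj, rfl⟩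
    · rw [leadCoeff, leadMon_gQuad]; exact coeff_gQuad_lead
    · rw [leadCoeff, leadMon_gLin hj]; exact coeff_gLin_lead hj
  · -- reducedness
    intro g hg g' hg' hne d hd
    rcases mem_GBset hg with rfl | ⟨j, hj, rfl⟩ <;>
      rcases mem_GBset hg' with rfl | ⟨j', hj', rfl⟩
    · exact absurd rfl hne
    · rw [leadMon_gLin hj']
      have hij' : i ≠ j' := fun h => hj' h.symm
      have := support_gQuad P Q i hd
      simp only [Finset.mem_insert, Finset.mem_singleton] at this
      intro hle
      have h1 := Finsupp.single_le_iff.mp hle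
      rcases this with rfl | rfl | rfl <;>
        simp [Finsupp.single_apply, hij'] at h1
    · rw [leadMon_gQuad]
      have := support_gLin P Q i j hd
      simp only [Finset.mem_insert, Finset.mem_singleton] at this
      intro hle
      have h1 := Finsupp.single_le_iff.mp hle
      rcases this with rfl | rfl | rfl <;>
        simp [Finsupp.single_apply, hj] at h1
    · rcases eq_or_ne j' j with rfl | hjj
      · exact absurd rfl hne
      · rw [leadMon_gLin hj']
        have hij' : i ≠ j' := fun h => hj' h.symm
        have hjj' : j ≠ j' := fun h => hjj h.symm
        have := support_gLin P Q i j hd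
        simp only [Finset.mem_insert, Finset.mem_singleton] at this
        intro hle
        have h1 := Finsupp.single_le_iff.mp hle
        rcases this with rfl | rfl | rfl <;>
          simp [Finsupp.single_apply, hij', hjj'] at h1

end Construction


section Classify
variable {n : ℕ} {K : Type*} [Field K]

/-- `d` is a standard monomial w.r.t. `m` and `G`. -/
def IsStd {n : ℕ} {K : Type*} [CommSemiring K] (m : MonomialOrder (Fin n))
    (G : Finset (MvPolynomial (Fin n) K)) (d : Fin n →₀ ℕ) : Prop :=
  ∀ g ∈ G, ¬ leadMon m g ≤ d

lemma not_std_iff {m : MonomialOrder (Fin n)} {G : Finset (MvPolynomial (Fin n) K)}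
    {d : Fin n →₀ ℕ} : ¬ IsStd m G d ↔ ∃ g ∈ G, leadMon m g ≤ d := by
  simp [IsStd]

lemma sum_triple {α β : Type*} [DecidableEq α] [AddCommMonoid β] {a b c : α}
    (hab : a ≠ b) (hac : a ≠ c) (hbc : b ≠ c) (f : α → β) :
    ∑ x ∈ ({a, b, c} : Finset α), f x = f a + f b + f c := by
  rw [Finset.sum_insert (by simp [hab, hac]), Finset.sum_pair hbc, add_assoc]

theorem reduced_GB_eq {P Q : Fin n → K} (hPQ : P ≠ Q) {m : MonomialOrder (Fin n)}
    {G : Finset (MvPolynomial (Fin n) K)}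
    (hG : IsReducedGroebnerBasis m (vanishingIdeal K ({P, Q} : Set (Fin n → K))) G) :
    ∃ i, P i ≠ Q i ∧ G = GBset P Q i := by
  obtain ⟨⟨hG0, hGI, hGB⟩, hlc, hred⟩ := hG
  have hIP : ∀ f ∈ vanishingIdeal K ({P, Q} : Set (Fin n → K)), MvPolynomial.eval P f = 0 :=
    fun f hf => (MvPolynomial.mem_vanishingIdeal_iff.mp hf) P (by simp)
  have hIQ : ∀ f ∈ vanishingIdeal K ({P, Q} : Set (Fin n → K)), MvPolynomial.eval Q f = 0 :=
    fun f hf => (MvPolynomial.mem_vanishingIdeal_iff.mp hf) Q (by simp)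
  have hmemI : ∀ f : MvPolynomial (Fin n) K, MvPolynomial.eval P f = 0 →
      MvPolynomial.eval Q f = 0 → f ∈ vanishingIdeal K ({P, Q} : Set (Fin n → K)) := by
    intro f h1 h2
    rw [MvPolynomial.mem_vanishingIdeal_iff]
    intro x hx
    rcases hx with h | h
    · rw [h]; exact h1
    · rw [Set.mem_singleton_iff] at h; rw [h]; exact h2
  -- leading monomials of elements of G are nonzero
  have hlm0 : ∀ g ∈ G, leadMon m g ≠ 0 := by
    intro g hg h0
    have hfC := eq_C_of_leadMon_zero h0
    have hev := hIP g (hGI hg)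
    rw [hfC, MvPolynomial.eval_C] at hev
    exact hG0 g hg (by rw [hfC, hev, map_zero])
  have hStd0 : IsStd m G 0 := fun g hg hle => hlm0 g hg (le_antisymm hle (zero_le : (0 : Fin n →₀ ℕ) ≤ leadMon m g))
  -- non-leading monomials in the support of an element of G are standard
  have hstd_support : ∀ g ∈ G, ∀ d ∈ g.support, d ≠ leadMon m g → IsStd m G d := by
    intro g hg d hd hne g' hg' hle
    rcases eq_or_ne g' g with rfl | hgg
    · have h1 := le_toSyn_leadMon (m := m) hd
      have h2 := m.toSyn_monotone hle
      exact hne (m.toSyn.injective (le_antisymm h1 h2))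
    · exact hred g hg g' hg' hgg d hd hle
  have hlead_not_std : ∀ g ∈ G, ¬ IsStd m G (leadMon m g) := fun g hg h => h g hg (le_refl _)
  -- a nonzero element of I cannot have all its monomials standard
  have hstd_contra : ∀ f ∈ vanishingIdeal K ({P, Q} : Set (Fin n → K)), f ≠ 0 →
      (∀ d ∈ f.support, IsStd m G d) → False := by
    intro f hf hf0 hall
    obtain ⟨g, hg, hle⟩ := hGB f hf hf0
    exact hall _ (leadMon_mem_support hf0) g hg hle
  -- there is a variable whose monomial is standard
  have hex : ∃ i, IsStd m G (Finsupp.single i 1) := by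
    by_contra hnone
    push_neg at hnone
    apply hPQ
    funext j
    obtain ⟨g, hg, hle⟩ := not_std_iff.mp (hnone j)
    rcases eq_zero_or_single_of_le_single_one hle with h0 | hsingle
    · exact absurd h0 (hlm0 g hg)
    have hsup : g.support ⊆ {Finsupp.single j 1, 0} := by
      intro d hd
      rcases eq_or_ne d (leadMon m g) with rfl | hne
      · simp [hsingle]
      · have hstd := hstd_support g hg d hd hne
        by_contra hmem
        simp only [Finset.mem_insert, Finset.mem_singleton, not_or] at hmem
        obtain ⟨k, hk⟩ := exists_single_le_of_ne_zero hmem.2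
        obtain ⟨g', hg', hle'⟩ := not_std_iff.mp (hnone k)
        exact hstd g' hg' (hle'.trans hk)
    have hrep := eq_sum_of_support_subset hsup
    rw [Finset.sum_pair (fun hh => (one_ne_zero (α := ℕ)) (Finsupp.single_eq_zero.mp hh))] at hrep
    have hcoeff : g.coeff (Finsupp.single j 1) = 1 := by
      have h1 := hlc g hg; rwa [leadCoeff, hsingle] at h1
    have hevP := hIP g (hGI hg)
    have hevQ := hIQ g (hGI hg)
    rw [hrep] at hevP hevQ
    simp only [map_add, MvPolynomial.eval_monomial, Finsupp.prod_single_index, pow_zero,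
      pow_one, Finsupp.prod_zero_index, hcoeff] at hevP hevQ
    linear_combination hevP - hevQ
  obtain ⟨i, hstdi⟩ := hex
  -- the two points differ in coordinate i
  have c0 : P i ≠ Q i := by
    intro heq
    have haa : aa P Q i i = 0 := by rw [aa, heq, sub_self, zero_div]
    refine hstd_contra (gLin P Q i i) (hmemI _ (eval_gLin_P P Q i i) ?_) ?_ ?_
    · simp only [gLin, map_add, MvPolynomial.eval_monomial, Finsupp.prod_single_index, pow_zero,
        pow_one, MvPolynomial.eval_C, haa]
      linear_combination -heq
    · intro h0
      have hco : (gLin P Q i i).coeff (Finsupp.single i 1) = 0 := by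
        rw [h0, MvPolynomial.coeff_zero]
      have h2 : (0 : Fin n →₀ ℕ) ≠ Finsupp.single i 1 :=
        fun h => one_ne_zero (Finsupp.single_eq_zero.mp h.symm)
      rw [gLin] at hco
      simp only [MvPolynomial.coeff_add, MvPolynomial.coeff_monomial, if_pos rfl,
        MvPolynomial.coeff_C, if_neg h2, haa] at hco
      simp at hco
    · intro d hd
      have hmem := support_gLin P Q i i hd
      simp only [Finset.mem_insert, Finset.mem_singleton] at hmem
      rcases hmem with rfl | rfl | rfl
      · exact hstdi
      · exact hstdi
      · exact hStd0
  -- every other variable monomial is non-standard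
  have c1 : ∀ k, k ≠ i → ¬ IsStd m G (Finsupp.single k 1) := by
    intro k hk hstdk
    refine hstd_contra (gLin P Q i k) (gLin_mem_I c0 k) (gLin_ne_zero hk) ?_
    intro d hd
    have hmem := support_gLin P Q i k hd
    simp only [Finset.mem_insert, Finset.mem_singleton] at hmem
    rcases hmem with rfl | rfl | rfl
    · exact hstdk
    · exact hstdi
    · exact hStd0
  -- X i ^ 2 is non-standard
  have c2 : ¬ IsStd m G (Finsupp.single i 2) := by
    intro hstd2
    refine hstd_contra (gQuad P Q i) gQuad_mem_I gQuad_ne_zero ?_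
    intro d hd
    have hmem := support_gQuad P Q i hd
    simp only [Finset.mem_insert, Finset.mem_singleton] at hmem
    rcases hmem with rfl | rfl | rfl
    · exact hstd2
    · exact hstdi
    · exact hStd0
  -- characterization of standard monomials
  have c3 : ∀ d, IsStd m G d → d = 0 ∨ d = Finsupp.single i 1 := by
    intro d hstd
    by_cases hd0 : d = 0
    · exact Or.inl hd0
    right
    have hji : ∀ j, j ≠ i → d j = 0 := by
      intro j hj
      by_contra hdj
      obtain ⟨g, hg, hle⟩ := not_std_iff.mp (c1 j hj)
      exact hstd g hg (hle.trans (Finsupp.single_le_iff.mpr (Nat.one_le_iff_ne_zero.mpr hdj)))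
    have hdeq := eq_single_self_of_eq_zero_off hji
    have hdi1 : d i ≤ 1 := by
      by_contra h2
      obtain ⟨g, hg, hle⟩ := not_std_iff.mp c2
      exact hstd g hg (hle.trans (Finsupp.single_le_iff.mpr (by omega)))
    have hdi : d i = 1 := by
      rcases Nat.lt_or_ge (d i) 1 with h | h
      · exact absurd (by rw [hdeq, Nat.lt_one_iff.mp h, Finsupp.single_zero]) hd0
      · omega
    rw [hdeq, hdi]
  -- existence of elements with the prescribed leading monomials
  have existsLin : ∀ j, j ≠ i → ∃ g ∈ G, leadMon m g = Finsupp.single j 1 := by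
    intro j hj
    obtain ⟨g, hg, hle⟩ := not_std_iff.mp (c1 j hj)
    rcases eq_zero_or_single_of_le_single_one hle with h0 | h1
    · exact absurd h0 (hlm0 g hg)
    · exact ⟨g, hg, h1⟩
  have existsQuad : ∃ g ∈ G, leadMon m g = Finsupp.single i 2 := by
    obtain ⟨g, hg, hle⟩ := not_std_iff.mp c2
    rcases le_single_two_cases hle with h0 | h1 | h2
    · exact absurd h0 (hlm0 g hg)
    · exact absurd (h1 ▸ hstdi) (hlead_not_std g hg)
    · exact ⟨g, hg, h2⟩
  -- support of any element of G
  have c5 : ∀ g ∈ G, g.support ⊆ {leadMon m g, Finsupp.single i 1, 0} := by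
    intro g hg d hd
    rcases eq_or_ne d (leadMon m g) with rfl | hne
    · simp
    · rcases c3 d (hstd_support g hg d hd hne) with rfl | rfl <;> simp
  -- uniqueness of the linear elements
  have glin_eq : ∀ g ∈ G, ∀ j, j ≠ i → leadMon m g = Finsupp.single j 1 → g = gLin P Q i j := by
    intro g hg j hj hlead
    have hPQi := sub_ne_zero.mpr c0
    have hji : Finsupp.single j (1:ℕ) ≠ Finsupp.single i 1 := fun h => hj (single_one_injective h)
    have hj0 : Finsupp.single j (1:ℕ) ≠ 0 := fun h => one_ne_zero (Finsupp.single_eq_zero.mp h)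
    have hi0 : Finsupp.single i (1:ℕ) ≠ 0 := fun h => one_ne_zero (Finsupp.single_eq_zero.mp h)
    have hsup : g.support ⊆ {Finsupp.single j 1, Finsupp.single i 1, 0} := by
      rw [← hlead]; exact c5 g hg
    have hrep := eq_sum_of_support_subset hsup
    rw [sum_triple hji hj0 hi0] at hrep
    have hcoeff : g.coeff (Finsupp.single j 1) = 1 := by
      have h1 := hlc g hg; rwa [leadCoeff, hlead] at h1
    have hevP := hIP g (hGI hg)
    have hevQ := hIQ g (hGI hg)
    rw [hrep] at hevP hevQ
    simp only [map_add, MvPolynomial.eval_monomial, Finsupp.prod_single_index, pow_zero,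
      pow_one, Finsupp.prod_zero_index, hcoeff] at hevP hevQ
    have hcmid : g.coeff (Finsupp.single i 1) = -(aa P Q i j) := by
      rw [aa, ← neg_div, eq_div_iff hPQi]
      linear_combination hevP - hevQ
    have hc0 : g.coeff 0 = aa P Q i j * P i - P j := by
      rw [hcmid] at hevP
      have haaj : aa P Q i j * (P i - Q i) = P j - Q j := div_mul_cancel₀ _ hPQi
      linear_combination hevP
    rw [hrep, hcoeff, hcmid, hc0, gLin, MvPolynomial.C_apply]
  -- uniqueness of the quadratic element
  have gquad_eq : ∀ g ∈ G, leadMon m g = Finsupp.single i 2 → g = gQuad P Q i := by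
    intro g hg hlead
    have hPQi := sub_ne_zero.mpr c0
    have h21 : Finsupp.single i (2:ℕ) ≠ Finsupp.single i 1 :=
      fun h => single_one_ne_single_two h.symm
    have h20 : Finsupp.single i (2:ℕ) ≠ 0 := fun h => two_ne_zero (Finsupp.single_eq_zero.mp h)
    have hi0 : Finsupp.single i (1:ℕ) ≠ 0 := fun h => one_ne_zero (Finsupp.single_eq_zero.mp h)
    have hsup : g.support ⊆ {Finsupp.single i 2, Finsupp.single i 1, 0} := by
      rw [← hlead]; exact c5 g hg
    have hrep := eq_sum_of_support_subset hsup
    rw [sum_triple h21 h20 hi0] at hrep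
    have hcoeff : g.coeff (Finsupp.single i 2) = 1 := by
      have h1 := hlc g hg; rwa [leadCoeff, hlead] at h1
    have hevP := hIP g (hGI hg)
    have hevQ := hIQ g (hGI hg)
    rw [hrep] at hevP hevQ
    simp only [map_add, MvPolynomial.eval_monomial, Finsupp.prod_single_index, pow_zero,
      pow_one, Finsupp.prod_zero_index, hcoeff] at hevP hevQ
    have hcmid : g.coeff (Finsupp.single i 1) = -(P i + Q i) := by
      have h1 : g.coeff (Finsupp.single i 1) * (P i - Q i) = -(P i + Q i) * (P i - Q i) := by
        linear_combination hevP - hevQ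
      exact mul_right_cancel₀ hPQi h1
    have hc0 : g.coeff 0 = P i * Q i := by
      rw [hcmid] at hevP
      linear_combination hevP
    rw [hrep, hcoeff, hcmid, hc0, gQuad, MvPolynomial.C_apply]
  refine ⟨i, c0, ?_⟩
  apply Finset.Subset.antisymm
  · intro g hg
    by_cases hLj : ∃ j, j ≠ i ∧ 1 ≤ leadMon m g j
    · obtain ⟨j, hj, hLj⟩ := hLj
      obtain ⟨g', hg', hlead'⟩ := existsLin j hj
      have hgg : g' = g := by
        by_contra hne
        exact hred g hg g' hg' hne (leadMon m g) (leadMon_mem_support (hG0 g hg))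
          (by rw [hlead']; exact Finsupp.single_le_iff.mpr hLj)
      subst hgg
      rw [glin_eq g' hg' j hj hlead']
      exact gLin_mem hj
    · push_neg at hLj
      have hL0 : ∀ j, j ≠ i → leadMon m g j = 0 := fun j hj => by have := hLj j hj; omega
      have hLeq := eq_single_self_of_eq_zero_off hL0
      have hLi : 2 ≤ leadMon m g i := by
        by_contra hlt
        rcases Nat.lt_or_ge (leadMon m g i) 1 with h | h
        · exact hlm0 g hg (by rw [hLeq, Nat.lt_one_iff.mp h, Finsupp.single_zero])
        · have h1 : leadMon m g i = 1 := by omega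
          exact (hlead_not_std g hg) (by rw [hLeq, h1]; exact hstdi)
      obtain ⟨g', hg', hlead'⟩ := existsQuad
      have hgg : g' = g := by
        by_contra hne
        refine hred g hg g' hg' hne (leadMon m g) (leadMon_mem_support (hG0 g hg)) ?_
        rw [hlead']
        refine le_trans ?_ (le_of_eq hLeq.symm)
        exact Finsupp.single_le_iff.mpr (by simpa using hLi)
      subst hgg
      rw [gquad_eq g' hg' hlead']
      exact gQuad_mem
  · intro x hx
    rcases mem_GBset hx with rfl | ⟨j, hj, rfl⟩
    · obtain ⟨g, hg, hlead⟩ := existsQuad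
      rw [← gquad_eq g hg hlead]; exact hg
    · obtain ⟨g, hg, hlead⟩ := existsLin j hj
      rw [← glin_eq g hg j hj hlead]; exact hg

end Classify


section Final
variable {n : ℕ} {K : Type*} [Field K]

lemma coeff_single_two_gLin (P Q : Fin n → K) (i' j : Fin n) (i : Fin n) :
    (gLin P Q i' j).coeff (Finsupp.single i 2) = 0 := by
  have h1 : Finsupp.single j (1:ℕ) ≠ Finsupp.single i 2 := single_one_ne_single_two
  have h2 : Finsupp.single i' (1:ℕ) ≠ Finsupp.single i 2 := single_one_ne_single_two
  have h3 : (0 : Fin n →₀ ℕ) ≠ Finsupp.single i 2 :=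
    fun h => two_ne_zero (Finsupp.single_eq_zero.mp h.symm)
  simp [gLin, MvPolynomial.coeff_monomial, MvPolynomial.coeff_C, h1, h2, h3]

lemma coeff_single_two_gQuad (P Q : Fin n → K) {i' i : Fin n} (hne : i' ≠ i) :
    (gQuad P Q i').coeff (Finsupp.single i 2) = 0 := by
  have h1 : Finsupp.single i' (2:ℕ) ≠ Finsupp.single i 2 := by
    intro h
    rcases (Finsupp.single_eq_single_iff _ _ _ _).mp h with ⟨h1, _⟩ | ⟨h1, _⟩
    · exact hne h1
    · omega
  have h2 : Finsupp.single i' (1:ℕ) ≠ Finsupp.single i 2 := single_one_ne_single_two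
  have h3 : (0 : Fin n →₀ ℕ) ≠ Finsupp.single i 2 :=
    fun h => two_ne_zero (Finsupp.single_eq_zero.mp h.symm)
  simp [gQuad, MvPolynomial.coeff_monomial, MvPolynomial.coeff_C, h1, h2, h3]

lemma GBset_inj {P Q : Fin n → K} {i i' : Fin n} (h : GBset P Q i = GBset P Q i') : i = i' := by
  by_contra hne
  have hmem : gQuad P Q i ∈ GBset P Q i' := h ▸ gQuad_mem
  rcases mem_GBset hmem with heq | ⟨j, hj, heq⟩
  · have hc := congrArg (MvPolynomial.coeff (Finsupp.single i 2)) heq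
    rw [coeff_gQuad_lead, coeff_single_two_gQuad P Q (fun hh => hne hh.symm)] at hc
    exact one_ne_zero hc
  · have hc := congrArg (MvPolynomial.coeff (Finsupp.single i 2)) heq
    rw [coeff_gQuad_lead, coeff_single_two_gLin] at hc
    exact one_ne_zero hc

lemma GBset_key (P Q : Fin n → K) (hPQ : P ≠ Q) :
    {G : Finset (MvPolynomial (Fin n) K) |
      ∃ m : MonomialOrder.{0,0} (Fin n),
        IsReducedGroebnerBasis m (vanishingIdeal K ({P, Q} : Set (Fin n → K))) G}
      = (fun i => GBset P Q i) '' {i | P i ≠ Q i} := by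
  ext G
  simp only [Set.mem_setOf_eq, Set.mem_image]
  constructor
  · rintro ⟨m, hm⟩
    obtain ⟨i, hi, rfl⟩ := reduced_GB_eq hPQ hm
    exact ⟨i, hi, rfl⟩
  · rintro ⟨i, hi, rfl⟩
    exact ⟨ordI i, constructed hi⟩

end Final

/-- For a prime `p` and `n ≥ 1`, the vanishing ideal of any two distinct points of
`(ZMod p)^n` has at most `n` distinct reduced Gröbner bases, and this bound is attained
by some pair of distinct points. -/
theorem num_reduced_GB_two_points_le_and_attained (p : ℕ) [Fact p.Prime] (n : ℕ) (hn : 1 ≤ n) :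
    (∀ P Q : Fin n → ZMod p, P ≠ Q →
      numReducedGB (vanishingIdeal (ZMod p) ({P, Q} : Set (Fin n → ZMod p))) ≤ n) ∧
    (∃ P Q : Fin n → ZMod p, P ≠ Q ∧
      numReducedGB (vanishingIdeal (ZMod p) ({P, Q} : Set (Fin n → ZMod p))) = n) := by
  constructor
  · intro P Q hPQ
    rw [numReducedGB, GBset_key P Q hPQ]
    calc Set.ncard ((fun i => GBset P Q i) '' {i | P i ≠ Q i})
        ≤ Set.ncard {i | P i ≠ Q i} := Set.ncard_image_le (Set.toFinite _)
      _ ≤ Set.ncard (Set.univ : Set (Fin n)) :=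
          Set.ncard_le_ncard (Set.subset_univ _) Set.finite_univ
      _ = n := by rw [Set.ncard_univ, Nat.card_eq_fintype_card, Fintype.card_fin]
  · haveI : Fact (1 < p) := ⟨(Fact.out : p.Prime).one_lt⟩
    set P : Fin n → ZMod p := fun _ => 0 with hP
    set Q : Fin n → ZMod p := fun _ => 1 with hQ
    have hPQ : P ≠ Q := by
      intro h
      have h0 := congrFun h ⟨0, hn⟩
      rw [hP, hQ] at h0
      exact zero_ne_one h0
    refine ⟨P, Q, hPQ, ?_⟩
    rw [numReducedGB, GBset_key P Q hPQ]
    have hD : {i : Fin n | P i ≠ Q i} = Set.univ :=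
      Set.eq_univ_of_forall (fun i => zero_ne_one)
    rw [hD]
    rw [Set.ncard_image_of_injOn (fun i _ i' _ h => GBset_inj h)]
    rw [Set.ncard_univ, Nat.card_eq_fintype_card, Fintype.card_fin]
end

section
/- Let K = ZMod 2 and n = 2, and let P, Q, R ∈ (Fin 2 → K) be three pairwise-distinct points. Let s₁, s₂, s₃ be the numbers of coordinates in which the pairs (P,Q), (P,R), (Q,R) respectively differ. Then the number of distinct reduced Gröbner bases of the vanishing ideal I({P, Q, R}) equals 2 − max(0, (card {i ∈ {1,2,3} : s_i = 1}) − 1). -/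
open MvPolynomial

namespace GBAux

abbrev Pt := Fin 2 → ZMod 2
abbrev Poly := MvPolynomial (Fin 2) (ZMod 2)

/-- The exponent vector `x^p y^q`. -/
noncomputable def dd (p q : ℕ) : Fin 2 →₀ ℕ := Finsupp.single 0 p + Finsupp.single 1 q

@[simp] lemma dd_apply0 (p q : ℕ) : dd p q 0 = p := by simp [dd, Finsupp.single_apply]
@[simp] lemma dd_apply1 (p q : ℕ) : dd p q 1 = q := by simp [dd, Finsupp.single_apply]

lemma fin2_cover : ∀ i j k : Fin 2, i ≠ j → k = i ∨ k = j := by decide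

lemma fin2_all (k : Fin 2) : k = 0 ∨ k = 1 := fin2_cover 0 1 k (by decide)

lemma eq_dd (u : Fin 2 →₀ ℕ) : u = dd (u 0) (u 1) := by
  ext k
  rcases fin2_all k with h | h <;> subst h <;> simp

lemma dd_eq_iff {p q p' q' : ℕ} : dd p q = dd p' q' ↔ p = p' ∧ q = q' := by
  constructor
  · intro h
    constructor
    · have := congrArg (fun u : Fin 2 →₀ ℕ => u 0) h; simpa using this
    · have := congrArg (fun u : Fin 2 →₀ ℕ => u 1) h; simpa using this
  · rintro ⟨rfl, rfl⟩; rfl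

lemma dd_le_of {p q : ℕ} {u : Fin 2 →₀ ℕ} (h0 : p ≤ u 0) (h1 : q ≤ u 1) : dd p q ≤ u := by
  rw [Finsupp.le_def]
  intro k
  rcases fin2_all k with h | h <;> subst h <;> simpa

lemma dd_le_dd {p q p' q' : ℕ} (h0 : p ≤ p') (h1 : q ≤ q') : dd p q ≤ dd p' q' :=
  dd_le_of (by simpa) (by simpa)

lemma of_le_dd {p q : ℕ} {u : Fin 2 →₀ ℕ} (h : u ≤ dd p q) : u 0 ≤ p ∧ u 1 ≤ q :=
  ⟨by simpa using Finsupp.le_def.mp h 0, by simpa using Finsupp.le_def.mp h 1⟩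

lemma of_dd_le {p q : ℕ} {u : Fin 2 →₀ ℕ} (h : dd p q ≤ u) : p ≤ u 0 ∧ q ≤ u 1 :=
  ⟨by simpa using Finsupp.le_def.mp h 0, by simpa using Finsupp.le_def.mp h 1⟩

lemma single0_eq_dd : Finsupp.single (0 : Fin 2) 1 = dd 1 0 := by
  rw [dd, Finsupp.single_zero, add_zero]

lemma single1_eq_dd : Finsupp.single (1 : Fin 2) 1 = dd 0 1 := by
  rw [dd, Finsupp.single_zero, zero_add]

lemma dd00_eq : dd 0 0 = 0 := by
  rw [dd, Finsupp.single_zero, Finsupp.single_zero, add_zero]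

/-! ### Generic `leadMon` lemmas -/

lemma le_leadMon (m : MonomialOrder (Fin 2)) {f : Poly} {u : Fin 2 →₀ ℕ}
    (hu : u ∈ f.support) : m.toSyn u ≤ m.toSyn (leadMon m f) := by
  unfold leadMon
  rw [AddEquiv.apply_symm_apply]
  exact Finset.le_sup hu

lemma leadMon_mem (m : MonomialOrder (Fin 2)) {f : Poly} (hf : f ≠ 0) :
    leadMon m f ∈ f.support := by
  obtain ⟨u, hu, he⟩ :=
    Finset.exists_mem_eq_sup f.support (support_nonempty.mpr hf) (fun d => m.toSyn d)
  unfold leadMon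
  rw [he, AddEquiv.symm_apply_apply]
  exact hu

lemma leadMon_eq (m : MonomialOrder (Fin 2)) {f : Poly} {v : Fin 2 →₀ ℕ}
    (hv : v ∈ f.support) (h : ∀ u ∈ f.support, m.toSyn u ≤ m.toSyn v) :
    leadMon m f = v := by
  unfold leadMon
  rw [le_antisymm (Finset.sup_le h) (Finset.le_sup hv), AddEquiv.symm_apply_apply]

lemma toSyn_lt_of (m : MonomialOrder (Fin 2)) {u v : Fin 2 →₀ ℕ} (h : u ≤ v) (hne : u ≠ v) :
    m.toSyn u < m.toSyn v :=
  m.toSyn_strictMono (lt_of_le_of_ne h hne)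

/-! ### ZMod 2 decidable facts -/

lemma zA : ∀ a b c : ZMod 2, a ≠ b → c = a ∨ c = b := by decide
lemma zB : ∀ a b : ZMod 2, a ≠ b → ∀ c : ZMod 2, c * a = c * b → c = 0 := by decide
lemma zC : ∀ a b c : ZMod 2, a ≠ b → a ≠ c → b ≠ c → False := by decide
lemma zD : ∀ a b c : ZMod 2, a ≠ b → a ≠ c → b = c := by decide
lemma zE1 : ∀ p q r : ZMod 2, p = p + q + r → q = r := by decide
lemma zE2 : ∀ p q r : ZMod 2, q = p + q + r → p = r := by decide
lemma zE3 : ∀ p q r : ZMod 2, r = p + q + r → p = q := by decide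

/-! ### Point configuration -/

variable {P Q R : Pt}

lemma apply_ne {i j : Fin 2} (hij : i ≠ j) (h : P ≠ Q) : P i ≠ Q i ∨ P j ≠ Q j := by
  by_contra hc
  push_neg at hc
  apply h
  funext k
  rcases fin2_cover i j k hij with rfl | rfl
  · exact hc.1
  · exact hc.2

lemma exists_col {i j : Fin 2} (hij : i ≠ j) (hPQ : P ≠ Q) (hPR : P ≠ R) (hQR : Q ≠ R) :
    ∃ u ∈ ({P, Q, R} : Set Pt), ∃ v ∈ ({P, Q, R} : Set Pt), ∃ w ∈ ({P, Q, R} : Set Pt),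
      u i = v i ∧ u j ≠ v j ∧ w i ≠ u i := by
  have hPm : P ∈ ({P, Q, R} : Set Pt) := by simp
  have hQm : Q ∈ ({P, Q, R} : Set Pt) := by simp
  have hRm : R ∈ ({P, Q, R} : Set Pt) := by simp
  by_cases h1 : P i = Q i
  · have hj : P j ≠ Q j := (apply_ne hij hPQ).resolve_left (by simpa using h1)
    by_cases h2 : R i = P i
    · exfalso
      have hj2 : P j ≠ R j := (apply_ne hij hPR).resolve_left (by rw [h2.symm] at h1 ⊢; simp [h2])
      have hj3 : Q j ≠ R j := (apply_ne hij hQR).resolve_left (by rw [← h1, h2]; simp)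
      exact zC (P j) (Q j) (R j) hj hj2 hj3
    · exact ⟨P, hPm, Q, hQm, R, hRm, h1, hj, h2⟩
  · by_cases h2 : P i = R i
    · have hj : P j ≠ R j := (apply_ne hij hPR).resolve_left (by simpa using h2)
      exact ⟨P, hPm, R, hRm, Q, hQm, h2, hj, fun hh => h1 hh.symm⟩
    · have h3 : Q i = R i := zD (P i) (Q i) (R i) h1 h2
      have hj : Q j ≠ R j := (apply_ne hij hQR).resolve_left (by simpa using h3)
      exact ⟨Q, hQm, R, hRm, P, hPm, h3, hj, h1⟩

/-! ### Evaluation helpers -/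

lemma eval_dep (j : Fin 2) (g : Poly) (hg : ∀ u ∈ g.support, ∀ k, k ≠ j → u k = 0)
    (s t : Pt) (hst : s j = t j) : eval s g = eval t g := by
  rw [MvPolynomial.eval_eq, MvPolynomial.eval_eq]
  apply Finset.sum_congr rfl
  intro u hu
  congr 1
  apply Finset.prod_congr rfl
  intro k hk
  have hkj : k = j := by
    by_contra h
    exact (Finsupp.mem_support_iff.mp hk) (hg u hu k h)
  rw [hkj, hst]

lemma eval_dd_mon (s : Pt) (p q : ℕ) (a : ZMod 2) :
    eval s (monomial (dd p q) a) = a * (s 0 ^ p * s 1 ^ q) := by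
  rw [dd, eval_monomial,
    Finsupp.prod_add_index' (fun _ => pow_zero _) (fun _ _ _ => pow_add _ _ _),
    Finsupp.prod_single_index (h := fun n e => s n ^ e) (pow_zero _),
    Finsupp.prod_single_index (h := fun n e => s n ^ e) (pow_zero _)]

lemma eq_C_own (f : Poly) (hs : ∀ u ∈ f.support, u = 0) :
    f = MvPolynomial.C (MvPolynomial.coeff 0 f) := by
  apply MvPolynomial.ext
  intro u
  rw [MvPolynomial.coeff_C]
  split_ifs with h
  · rw [← h]
  · have hu : u ∉ f.support := fun hu => h ((hs u hu) ▸ rfl)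
    exact MvPolynomial.notMem_support_iff.mp hu

/-! ### The key lemma: no element of the ideal has a small leading structure -/

lemma keyA (hPQ : P ≠ Q) (hPR : P ≠ R) (hQR : Q ≠ R) {i j : Fin 2} (hij : i ≠ j)
    {f : Poly} (hfI : f ∈ vanishingIdeal (ZMod 2) ({P, Q, R} : Set Pt))
    (hsupp : ∀ u ∈ f.support, u = Finsupp.single i 1 ∨ u i = 0) :
    MvPolynomial.coeff (Finsupp.single i 1) f = 0 := by
  set c := MvPolynomial.coeff (Finsupp.single i 1) f with hc
  set g : Poly := f - monomial (Finsupp.single i 1) c with hg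
  have hgs : ∀ u ∈ g.support, ∀ k, k ≠ j → u k = 0 := by
    intro u hu k hk
    have hne : u ≠ Finsupp.single i 1 := by
      rintro rfl
      apply MvPolynomial.mem_support_iff.mp hu
      rw [hg, MvPolynomial.coeff_sub, MvPolynomial.coeff_monomial, if_pos rfl, ← hc, sub_self]
    have hcoeff : MvPolynomial.coeff u g = MvPolynomial.coeff u f := by
      rw [hg, MvPolynomial.coeff_sub, MvPolynomial.coeff_monomial,
        if_neg (fun h => hne h.symm), sub_zero]
    have huf : u ∈ f.support := by
      rw [MvPolynomial.mem_support_iff, ← hcoeff]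
      exact MvPolynomial.mem_support_iff.mp hu
    have h0 : u i = 0 := (hsupp u huf).resolve_left hne
    rcases fin2_cover i j k hij with rfl | rfl
    · exact h0
    · exact absurd rfl hk
  have heval : ∀ s : Pt, s ∈ ({P, Q, R} : Set Pt) → eval s g = -(c * s i) := by
    intro s hs
    have h1 : eval s f = 0 := (mem_vanishingIdeal_iff.mp hfI) s hs
    rw [hg, map_sub, h1, eval_monomial,
      Finsupp.prod_single_index (h := fun n e => s n ^ e) (pow_zero _), pow_one, zero_sub]
  obtain ⟨u, hu, v, hv, w, hw, hiuv, hjuv, hwu⟩ := exists_col hij hPQ hPR hQR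
  have h1 := heval u hu
  have h2 := heval v hv
  have h3 := heval w hw
  have huv : eval u g = eval v g := by rw [h1, h2, hiuv]
  have hwu' : eval w g = eval u g := by
    rcases zA (u j) (v j) (w j) hjuv with h | h
    · exact eval_dep j g hgs w u h
    · rw [eval_dep j g hgs w v h, huv]
  have hmul : c * w i = c * u i := by
    rw [h3, h1] at hwu'
    exact neg_injective hwu'
  exact zB (w i) (u i) hwu c hmul

lemma affine_zero (hPQ : P ≠ Q) (hPR : P ≠ R) (hQR : Q ≠ R) {f : Poly}
    (hfI : f ∈ vanishingIdeal (ZMod 2) ({P, Q, R} : Set Pt))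
    (hs : ∀ u ∈ f.support, u = dd 0 0 ∨ u = dd 1 0 ∨ u = dd 0 1) : f = 0 := by
  have h10 : MvPolynomial.coeff (dd 1 0) f = 0 := by
    rw [← single0_eq_dd]
    apply keyA hPQ hPR hQR (show (0 : Fin 2) ≠ 1 by decide) hfI
    intro u hu
    rcases hs u hu with h | h | h
    · right; rw [h]; simp
    · left; rw [h, single0_eq_dd]
    · right; rw [h]; simp
  have h01 : MvPolynomial.coeff (dd 0 1) f = 0 := by
    rw [← single1_eq_dd]
    apply keyA hPQ hPR hQR (show (1 : Fin 2) ≠ 0 by decide) hfI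
    intro u hu
    rcases hs u hu with h | h | h
    · right; rw [h]; simp
    · right; rw [h]; simp
    · left; rw [h, single1_eq_dd]
  have hz : ∀ u ∈ f.support, u = 0 := by
    intro u hu
    rcases hs u hu with h | h | h
    · rw [h, dd00_eq]
    · exfalso; rw [MvPolynomial.mem_support_iff, h] at hu; exact hu h10
    · exfalso; rw [MvPolynomial.mem_support_iff, h] at hu; exact hu h01
  have hC := eq_C_own f hz
  have hc0 : MvPolynomial.coeff 0 f = 0 := by
    have hP := (mem_vanishingIdeal_iff.mp hfI) P (by simp)
    rw [hC] at hP
    simpa using hP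
  rw [hC, hc0, map_zero]

/-! ### The three basis polynomials -/

noncomputable def fX : Poly := monomial (dd 2 0) 1 + monomial (dd 1 0) 1
noncomputable def fY : Poly := monomial (dd 0 2) 1 + monomial (dd 0 1) 1
noncomputable def fE (a : Pt) : Poly :=
  monomial (dd 1 1) 1 + monomial (dd 1 0) (a 1 + 1) + monomial (dd 0 1) (a 0 + 1) +
    monomial (dd 0 0) ((a 0 + 1) * (a 1 + 1))

lemma coeff_fX_20 : MvPolynomial.coeff (dd 2 0) fX = 1 := by
  rw [fX, MvPolynomial.coeff_add, MvPolynomial.coeff_monomial, if_pos rfl,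
    MvPolynomial.coeff_monomial, if_neg (fun h => by exact absurd (dd_eq_iff.mp h).1 (by omega)),
    add_zero]

lemma coeff_fY_02 : MvPolynomial.coeff (dd 0 2) fY = 1 := by
  rw [fY, MvPolynomial.coeff_add, MvPolynomial.coeff_monomial, if_pos rfl,
    MvPolynomial.coeff_monomial, if_neg (fun h => by exact absurd (dd_eq_iff.mp h).2 (by omega)),
    add_zero]

lemma coeff_fE_11 (a : Pt) : MvPolynomial.coeff (dd 1 1) (fE a) = 1 := by
  rw [fE, MvPolynomial.coeff_add, MvPolynomial.coeff_add, MvPolynomial.coeff_add,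
    MvPolynomial.coeff_monomial, if_pos rfl,
    MvPolynomial.coeff_monomial, if_neg (fun h => by exact absurd (dd_eq_iff.mp h).2 (by omega)),
    MvPolynomial.coeff_monomial, if_neg (fun h => by exact absurd (dd_eq_iff.mp h).1 (by omega)),
    MvPolynomial.coeff_monomial, if_neg (fun h => by exact absurd (dd_eq_iff.mp h).1 (by omega)),
    add_zero, add_zero, add_zero]

lemma supp_fX {u : Fin 2 →₀ ℕ} (hu : u ∈ fX.support) : u = dd 2 0 ∨ u = dd 1 0 := by
  by_contra hc
  push_neg at hc
  apply MvPolynomial.mem_support_iff.mp hu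
  rw [fX, MvPolynomial.coeff_add, MvPolynomial.coeff_monomial,
    if_neg (fun h => hc.1 h.symm), MvPolynomial.coeff_monomial,
    if_neg (fun h => hc.2 h.symm), add_zero]

lemma supp_fY {u : Fin 2 →₀ ℕ} (hu : u ∈ fY.support) : u = dd 0 2 ∨ u = dd 0 1 := by
  by_contra hc
  push_neg at hc
  apply MvPolynomial.mem_support_iff.mp hu
  rw [fY, MvPolynomial.coeff_add, MvPolynomial.coeff_monomial,
    if_neg (fun h => hc.1 h.symm), MvPolynomial.coeff_monomial,
    if_neg (fun h => hc.2 h.symm), add_zero]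

lemma supp_fE {a : Pt} {u : Fin 2 →₀ ℕ} (hu : u ∈ (fE a).support) :
    u = dd 1 1 ∨ u = dd 1 0 ∨ u = dd 0 1 ∨ u = dd 0 0 := by
  by_contra hc
  push_neg at hc
  apply MvPolynomial.mem_support_iff.mp hu
  rw [fE, MvPolynomial.coeff_add, MvPolynomial.coeff_add, MvPolynomial.coeff_add,
    MvPolynomial.coeff_monomial, if_neg (fun h => hc.1 h.symm),
    MvPolynomial.coeff_monomial, if_neg (fun h => hc.2.1 h.symm),
    MvPolynomial.coeff_monomial, if_neg (fun h => hc.2.2.1 h.symm),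
    MvPolynomial.coeff_monomial, if_neg (fun h => hc.2.2.2 h.symm)]
  ring

lemma fX_ne : fX ≠ 0 := by
  intro h
  have := coeff_fX_20
  rw [h] at this
  simp at this

lemma fY_ne : fY ≠ 0 := by
  intro h
  have := coeff_fY_02
  rw [h] at this
  simp at this

lemma fE_ne (a : Pt) : fE a ≠ 0 := by
  intro h
  have := coeff_fE_11 a
  rw [h] at this
  simp at this

lemma fX_mem : fX ∈ vanishingIdeal (ZMod 2) ({P, Q, R} : Set Pt) := by
  rw [mem_vanishingIdeal_iff]
  intro x _
  change eval x _ = 0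
  rw [fX, map_add, eval_dd_mon, eval_dd_mon]
  exact (by decide : ∀ z w : ZMod 2, (1 : ZMod 2) * (z ^ 2 * w ^ 0) + 1 * (z ^ 1 * w ^ 0) = 0)
    (x 0) (x 1)

lemma fY_mem : fY ∈ vanishingIdeal (ZMod 2) ({P, Q, R} : Set Pt) := by
  rw [mem_vanishingIdeal_iff]
  intro x _
  change eval x _ = 0
  rw [fY, map_add, eval_dd_mon, eval_dd_mon]
  exact (by decide : ∀ z w : ZMod 2, (1 : ZMod 2) * (z ^ 0 * w ^ 2) + 1 * (z ^ 0 * w ^ 1) = 0)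
    (x 0) (x 1)

/-- The "fourth point". -/
noncomputable def pa (P Q R : Pt) : Pt := fun k => P k + Q k + R k

lemma ne_pa (hPQ : P ≠ Q) (hPR : P ≠ R) (hQR : Q ≠ R) :
    ∀ x ∈ ({P, Q, R} : Set Pt), x 0 ≠ pa P Q R 0 ∨ x 1 ≠ pa P Q R 1 := by
  have key : ∀ x : Pt, x ≠ pa P Q R → x 0 ≠ pa P Q R 0 ∨ x 1 ≠ pa P Q R 1 := by
    intro x hx
    by_contra hc
    push_neg at hc
    apply hx
    funext k
    rcases fin2_all k with rfl | rfl
    · exact hc.1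
    · exact hc.2
  intro x hx
  rcases hx with rfl | rfl | rfl
  · apply key
    intro h
    exact hQR (funext fun k => zE1 (x k) (Q k) (R k) (congrFun h k))
  · apply key
    intro h
    exact hPR (funext fun k => zE2 (P k) (x k) (R k) (congrFun h k))
  · apply key
    intro h
    exact hPQ (funext fun k => zE3 (P k) (Q k) (x k) (congrFun h k))

lemma fE_mem (hPQ : P ≠ Q) (hPR : P ≠ R) (hQR : Q ≠ R) :
    fE (pa P Q R) ∈ vanishingIdeal (ZMod 2) ({P, Q, R} : Set Pt) := by
  rw [mem_vanishingIdeal_iff]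
  intro x hx
  change eval x _ = 0
  rw [fE, map_add, map_add, map_add, eval_dd_mon, eval_dd_mon, eval_dd_mon, eval_dd_mon]
  have hne := ne_pa hPQ hPR hQR x hx
  exact (by decide : ∀ z w a b : ZMod 2, (z ≠ a ∨ w ≠ b) →
      (1 : ZMod 2) * (z ^ 1 * w ^ 1) + (b + 1) * (z ^ 1 * w ^ 0) + (a + 1) * (z ^ 0 * w ^ 1) +
        (a + 1) * (b + 1) * (z ^ 0 * w ^ 0) = 0)
    (x 0) (x 1) (pa P Q R 0) (pa P Q R 1) hne

/-! ### Leading monomials of the basis polynomials (for an arbitrary order) -/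

lemma leadMon_fX (m : MonomialOrder (Fin 2)) : leadMon m fX = dd 2 0 := by
  apply leadMon_eq
  · rw [MvPolynomial.mem_support_iff, coeff_fX_20]; exact one_ne_zero
  · intro u hu
    rcases supp_fX hu with h | h
    · rw [h]
    · rw [h]; exact m.toSyn_monotone (dd_le_dd (by omega) (by omega))

lemma leadMon_fY (m : MonomialOrder (Fin 2)) : leadMon m fY = dd 0 2 := by
  apply leadMon_eq
  · rw [MvPolynomial.mem_support_iff, coeff_fY_02]; exact one_ne_zero
  · intro u hu
    rcases supp_fY hu with h | h
    · rw [h]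
    · rw [h]; exact m.toSyn_monotone (dd_le_dd (by omega) (by omega))

lemma leadMon_fE (m : MonomialOrder (Fin 2)) (a : Pt) : leadMon m (fE a) = dd 1 1 := by
  apply leadMon_eq
  · rw [MvPolynomial.mem_support_iff, coeff_fE_11]; exact one_ne_zero
  · intro u hu
    rcases supp_fE hu with h | h | h | h <;> rw [h]
    · exact m.toSyn_monotone (dd_le_dd (by omega) (by omega))
    · exact m.toSyn_monotone (dd_le_dd (by omega) (by omega))
    · exact m.toSyn_monotone (dd_le_dd (by omega) (by omega))

/-! ### The leading monomial of an element of the ideal is not small -/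

lemma leadMon_not_small (hPQ : P ≠ Q) (hPR : P ≠ R) (hQR : Q ≠ R)
    (m : MonomialOrder (Fin 2)) {f : Poly}
    (hfI : f ∈ vanishingIdeal (ZMod 2) ({P, Q, R} : Set Pt)) (hf0 : f ≠ 0) :
    leadMon m f ≠ dd 0 0 ∧ leadMon m f ≠ dd 1 0 ∧ leadMon m f ≠ dd 0 1 := by
  have hcoeff : MvPolynomial.coeff (leadMon m f) f ≠ 0 :=
    MvPolynomial.mem_support_iff.mp (leadMon_mem m hf0)
  refine ⟨?_, ?_, ?_⟩
  · intro h
    rw [dd00_eq] at h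
    have hz : ∀ u ∈ f.support, u = 0 := by
      intro u hu
      have h1 := le_leadMon m hu
      rw [h] at h1
      have h2 : m.toSyn 0 ≤ m.toSyn u :=
        m.toSyn_monotone (Finsupp.le_def.mpr fun i => Nat.zero_le _)
      exact m.toSyn.injective (le_antisymm h1 h2)
    have hC := eq_C_own f hz
    apply hf0
    have hP := (mem_vanishingIdeal_iff.mp hfI) P (by simp)
    rw [hC] at hP ⊢
    change eval P _ = 0 at hP
    simp only [eval_C] at hP
    rw [hP, map_zero]
  · intro h
    apply hcoeff
    rw [h, ← single0_eq_dd]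
    apply keyA hPQ hPR hQR (show (0 : Fin 2) ≠ 1 by decide) hfI
    intro u hu
    by_cases hui : u = Finsupp.single 0 1
    · exact Or.inl hui
    · right
      by_contra hne0
      have hle : dd 1 0 ≤ u := dd_le_of (by omega) (by omega)
      have hlt := toSyn_lt_of m hle (fun hh => hui (by rw [single0_eq_dd, hh]))
      have hle2 := le_leadMon m hu
      rw [h] at hle2
      exact absurd hle2 (not_le.mpr hlt)
  · intro h
    apply hcoeff
    rw [h, ← single1_eq_dd]
    apply keyA hPQ hPR hQR (show (1 : Fin 2) ≠ 0 by decide) hfI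
    intro u hu
    by_cases hui : u = Finsupp.single 1 1
    · exact Or.inl hui
    · right
      by_contra hne0
      have hle : dd 0 1 ≤ u := dd_le_of (by omega) (by omega)
      have hlt := toSyn_lt_of m hle (fun hh => hui (by rw [single1_eq_dd, hh]))
      have hle2 := le_leadMon m hu
      rw [h] at hle2
      exact absurd hle2 (not_le.mpr hlt)


lemma enum3 {u : Fin 2 →₀ ℕ} (h0 : u 0 ≤ 1) (h1 : u 1 ≤ 1) (h2 : ¬(1 ≤ u 0 ∧ 1 ≤ u 1)) :
    u = dd 0 0 ∨ u = dd 1 0 ∨ u = dd 0 1 := by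
  have hcase : (u 0 = 0 ∧ u 1 = 0) ∨ (u 0 = 1 ∧ u 1 = 0) ∨ (u 0 = 0 ∧ u 1 = 1) := by omega
  rcases hcase with ⟨a, b⟩ | ⟨a, b⟩ | ⟨a, b⟩
  · left; rw [eq_dd u, a, b]
  · right; left; rw [eq_dd u, a, b]
  · right; right; rw [eq_dd u, a, b]

/-! ### `{fX, fY, fE}` is a reduced Gröbner basis for every monomial order -/

lemma isRGB (hPQ : P ≠ Q) (hPR : P ≠ R) (hQR : Q ≠ R) (m : MonomialOrder (Fin 2)) :
    IsReducedGroebnerBasis m (vanishingIdeal (ZMod 2) ({P, Q, R} : Set Pt))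
      {fX, fY, fE (pa P Q R)} := by
  refine ⟨⟨?_, ?_, ?_⟩, ?_, ?_⟩
  · intro g hg
    rcases Finset.mem_insert.mp hg with rfl | hg'
    · exact fX_ne
    rcases Finset.mem_insert.mp hg' with rfl | hg''
    · exact fY_ne
    rw [Finset.mem_singleton] at hg''
    rw [hg'']
    exact fE_ne _
  · intro g hg
    simp only [Finset.coe_insert, Set.mem_insert_iff, Finset.coe_singleton,
      Set.mem_singleton_iff] at hg
    rcases hg with rfl | rfl | rfl
    · exact fX_mem
    · exact fY_mem
    · exact fE_mem hPQ hPR hQR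
  · intro f hf hf0
    obtain ⟨h00, h10, h01⟩ := leadMon_not_small hPQ hPR hQR m hf hf0
    by_cases hc : 1 ≤ leadMon m f 0 ∧ 1 ≤ leadMon m f 1
    · refine ⟨fE (pa P Q R), by simp, ?_⟩
      rw [leadMon_fE]
      exact dd_le_of hc.1 hc.2
    · by_cases hb : leadMon m f 1 = 0
      · have c0 : leadMon m f 0 ≠ 0 := fun h => h00 (by rw [eq_dd (leadMon m f), h, hb])
        have c1 : leadMon m f 0 ≠ 1 := fun h => h10 (by rw [eq_dd (leadMon m f), h, hb])
        refine ⟨fX, by simp, ?_⟩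
        rw [leadMon_fX]
        exact dd_le_of (by omega) (by omega)
      · have c0 : leadMon m f 0 = 0 := by omega
        have c1 : leadMon m f 1 ≠ 1 := fun h => h01 (by rw [eq_dd (leadMon m f), c0, h])
        refine ⟨fY, by simp, ?_⟩
        rw [leadMon_fY]
        exact dd_le_of (by omega) (by omega)
  · intro g hg
    rcases Finset.mem_insert.mp hg with rfl | hg'
    · unfold leadCoeff; rw [leadMon_fX]; exact coeff_fX_20
    rcases Finset.mem_insert.mp hg' with rfl | hg''
    · unfold leadCoeff; rw [leadMon_fY]; exact coeff_fY_02
    rw [Finset.mem_singleton] at hg''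
    rw [hg'']
    unfold leadCoeff; rw [leadMon_fE]; exact coeff_fE_11 _
  · intro g hg g' hg' hne' d hd
    rcases Finset.mem_insert.mp hg with rfl | hgg
    · -- g = fX
      have hd1 : d 1 = 0 := by rcases supp_fX hd with h | h <;> rw [h] <;> simp
      rcases Finset.mem_insert.mp hg' with rfl | hgg'
      · exact absurd rfl hne'
      rcases Finset.mem_insert.mp hgg' with rfl | hgg''
      · rw [leadMon_fY]; intro hle; have := of_dd_le hle; omega
      rw [Finset.mem_singleton] at hgg''
      rw [hgg'', leadMon_fE]
      intro hle; have := of_dd_le hle; omega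
    rcases Finset.mem_insert.mp hgg with rfl | hgg2
    · -- g = fY
      have hd0 : d 0 = 0 := by rcases supp_fY hd with h | h <;> rw [h] <;> simp
      rcases Finset.mem_insert.mp hg' with rfl | hgg'
      · rw [leadMon_fX]; intro hle; have := of_dd_le hle; omega
      rcases Finset.mem_insert.mp hgg' with rfl | hgg''
      · exact absurd rfl hne'
      rw [Finset.mem_singleton] at hgg''
      rw [hgg'', leadMon_fE]
      intro hle; have := of_dd_le hle; omega
    rw [Finset.mem_singleton] at hgg2
    subst hgg2
    -- g = fE
    have hdb : d 0 ≤ 1 ∧ d 1 ≤ 1 := by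
      rcases supp_fE hd with h | h | h | h <;> rw [h] <;> simp
    rcases Finset.mem_insert.mp hg' with rfl | hgg'
    · rw [leadMon_fX]; intro hle; have := of_dd_le hle; omega
    rcases Finset.mem_insert.mp hgg' with rfl | hgg''
    · rw [leadMon_fY]; intro hle; have := of_dd_le hle; omega
    rw [Finset.mem_singleton] at hgg''
    exact absurd hgg'' hne'

/-! ### Uniqueness of the reduced Gröbner basis -/

lemma unique_GB (hPQ : P ≠ Q) (hPR : P ≠ R) (hQR : Q ≠ R) (m : MonomialOrder (Fin 2))
    (G : Finset Poly)
    (hG : IsReducedGroebnerBasis m (vanishingIdeal (ZMod 2) ({P, Q, R} : Set Pt)) G) :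
    G = {fX, fY, fE (pa P Q R)} := by
  obtain ⟨⟨hne, hsub, hdiv⟩, hlc, hred⟩ := hG
  obtain ⟨g1, hg1G, hg1le⟩ := hdiv fX fX_mem fX_ne
  obtain ⟨g2, hg2G, hg2le⟩ := hdiv fY fY_mem fY_ne
  obtain ⟨g3, hg3G, hg3le⟩ := hdiv (fE (pa P Q R)) (fE_mem hPQ hPR hQR) (fE_ne _)
  rw [leadMon_fX] at hg1le
  rw [leadMon_fY] at hg2le
  rw [leadMon_fE] at hg3le
  have hI1 : g1 ∈ vanishingIdeal (ZMod 2) ({P, Q, R} : Set Pt) := hsub (Finset.mem_coe.mpr hg1G)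
  have hI2 : g2 ∈ vanishingIdeal (ZMod 2) ({P, Q, R} : Set Pt) := hsub (Finset.mem_coe.mpr hg2G)
  have hI3 : g3 ∈ vanishingIdeal (ZMod 2) ({P, Q, R} : Set Pt) := hsub (Finset.mem_coe.mpr hg3G)
  have hn1 := hne g1 hg1G
  have hn2 := hne g2 hg2G
  have hn3 := hne g3 hg3G
  have hs1 := leadMon_not_small hPQ hPR hQR m hI1 hn1
  have hs2 := leadMon_not_small hPQ hPR hQR m hI2 hn2
  have hs3 := leadMon_not_small hPQ hPR hQR m hI3 hn3
  have hlm1 : leadMon m g1 = dd 2 0 := by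
    obtain ⟨b0, b1⟩ := of_le_dd hg1le
    have c0 : leadMon m g1 0 ≠ 0 :=
      fun h => hs1.1 (by rw [eq_dd (leadMon m g1), h, (by omega : leadMon m g1 1 = 0)])
    have c1 : leadMon m g1 0 ≠ 1 :=
      fun h => hs1.2.1 (by rw [eq_dd (leadMon m g1), h, (by omega : leadMon m g1 1 = 0)])
    rw [eq_dd (leadMon m g1), (by omega : leadMon m g1 0 = 2),
      (by omega : leadMon m g1 1 = 0)]
  have hlm2 : leadMon m g2 = dd 0 2 := by
    obtain ⟨b0, b1⟩ := of_le_dd hg2le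
    have c0 : leadMon m g2 1 ≠ 0 :=
      fun h => hs2.1 (by rw [eq_dd (leadMon m g2), h, (by omega : leadMon m g2 0 = 0)])
    have c1 : leadMon m g2 1 ≠ 1 :=
      fun h => hs2.2.2 (by rw [eq_dd (leadMon m g2), h, (by omega : leadMon m g2 0 = 0)])
    rw [eq_dd (leadMon m g2), (by omega : leadMon m g2 0 = 0),
      (by omega : leadMon m g2 1 = 2)]
  have hlm3 : leadMon m g3 = dd 1 1 := by
    obtain ⟨b0, b1⟩ := of_le_dd hg3le
    have c00 : ¬(leadMon m g3 0 = 0 ∧ leadMon m g3 1 = 0) :=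
      fun h => hs3.1 (by rw [eq_dd (leadMon m g3), h.1, h.2])
    have c10 : ¬(leadMon m g3 0 = 1 ∧ leadMon m g3 1 = 0) :=
      fun h => hs3.2.1 (by rw [eq_dd (leadMon m g3), h.1, h.2])
    have c01 : ¬(leadMon m g3 0 = 0 ∧ leadMon m g3 1 = 1) :=
      fun h => hs3.2.2 (by rw [eq_dd (leadMon m g3), h.1, h.2])
    rw [eq_dd (leadMon m g3), (by omega : leadMon m g3 0 = 1),
      (by omega : leadMon m g3 1 = 1)]
  have d12 : g1 ≠ g2 := by
    intro h; rw [h, hlm2] at hlm1; exact absurd (dd_eq_iff.mp hlm1).1 (by omega)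
  have d13 : g1 ≠ g3 := by
    intro h; rw [h, hlm3] at hlm1; exact absurd (dd_eq_iff.mp hlm1).1 (by omega)
  have d23 : g2 ≠ g3 := by
    intro h; rw [h, hlm3] at hlm2; exact absurd (dd_eq_iff.mp hlm2).2 (by omega)
  -- identify g3
  have hsupp3 : ∀ d ∈ g3.support, d 0 ≤ 1 ∧ d 1 ≤ 1 := by
    intro d hd
    have hr1 := hred g3 hg3G g1 hg1G d13 d hd
    have hr2 := hred g3 hg3G g2 hg2G d23 d hd
    rw [hlm1] at hr1
    rw [hlm2] at hr2
    constructor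
    · by_contra hcc; exact hr1 (dd_le_of (by omega) (by omega))
    · by_contra hcc; exact hr2 (dd_le_of (by omega) (by omega))
  have hc3 : MvPolynomial.coeff (dd 1 1) g3 = 1 := by
    have h := hlc g3 hg3G
    unfold leadCoeff at h
    rw [hlm3] at h
    exact h
  have hg3E : g3 = fE (pa P Q R) := by
    apply sub_eq_zero.mp
    apply affine_zero hPQ hPR hQR (Ideal.sub_mem _ hI3 (fE_mem hPQ hPR hQR))
    intro u hu
    have hune : u ≠ dd 1 1 := by
      intro hh
      apply MvPolynomial.mem_support_iff.mp hu
      rw [hh, MvPolynomial.coeff_sub, hc3, coeff_fE_11, sub_self]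
    rcases Finset.mem_union.mp (MvPolynomial.support_sub _ _ _ hu) with h | h
    · obtain ⟨e0, e1⟩ := hsupp3 u h
      refine enum3 e0 e1 (fun hcc => hune ?_)
      rw [eq_dd u, (by omega : u 0 = 1), (by omega : u 1 = 1)]
    · rcases supp_fE h with h' | h' | h' | h'
      · exact absurd h' hune
      · right; left; exact h'
      · right; right; exact h'
      · left; exact h'
  -- identify g1
  have hcg1 : MvPolynomial.coeff (dd 2 0) g1 = 1 := by
    have h := hlc g1 hg1G
    unfold leadCoeff at h
    rw [hlm1] at h
    exact h
  have hsupp1 : ∀ d ∈ g1.support, d = dd 2 0 ∨ d = dd 0 0 ∨ d = dd 1 0 ∨ d = dd 0 1 := by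
    intro d hd
    have hr2 := hred g1 hg1G g2 hg2G d12.symm d hd
    have hr3 := hred g1 hg1G g3 hg3G d13.symm d hd
    rw [hlm2] at hr2
    rw [hlm3] at hr3
    have e1 : d 1 ≤ 1 := by by_contra hcc; exact hr2 (dd_le_of (by omega) (by omega))
    have e2 : ¬(1 ≤ d 0 ∧ 1 ≤ d 1) := fun hcc => hr3 (dd_le_of hcc.1 hcc.2)
    have e0 : d 0 ≤ 2 := by
      by_contra hcc
      have hle : dd 2 0 ≤ d := dd_le_of (by omega) (by omega)
      have hne2 : dd 2 0 ≠ d := by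
        intro hh
        have := congrArg (fun u : Fin 2 →₀ ℕ => u 0) hh
        simp at this
        omega
      have hlt := toSyn_lt_of m hle hne2
      have hle2 := le_leadMon m hd
      rw [hlm1] at hle2
      exact absurd hle2 (not_le.mpr hlt)
    by_cases hq : d 0 = 2
    · left; rw [eq_dd d, hq, (by omega : d 1 = 0)]
    · right; exact enum3 (by omega) e1 e2
  have hg1X : g1 = fX := by
    apply sub_eq_zero.mp
    apply affine_zero hPQ hPR hQR (Ideal.sub_mem _ hI1 fX_mem)
    intro u hu
    have hune : u ≠ dd 2 0 := by
      intro hh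
      apply MvPolynomial.mem_support_iff.mp hu
      rw [hh, MvPolynomial.coeff_sub, hcg1, coeff_fX_20, sub_self]
    rcases Finset.mem_union.mp (MvPolynomial.support_sub _ _ _ hu) with h | h
    · rcases hsupp1 u h with h' | h' | h' | h'
      · exact absurd h' hune
      · left; exact h'
      · right; left; exact h'
      · right; right; exact h'
    · rcases supp_fX h with h' | h'
      · exact absurd h' hune
      · right; left; exact h'
  -- identify g2
  have hcg2 : MvPolynomial.coeff (dd 0 2) g2 = 1 := by
    have h := hlc g2 hg2G
    unfold leadCoeff at h
    rw [hlm2] at h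
    exact h
  have hsupp2 : ∀ d ∈ g2.support, d = dd 0 2 ∨ d = dd 0 0 ∨ d = dd 1 0 ∨ d = dd 0 1 := by
    intro d hd
    have hr1 := hred g2 hg2G g1 hg1G d12 d hd
    have hr3 := hred g2 hg2G g3 hg3G d23.symm d hd
    rw [hlm1] at hr1
    rw [hlm3] at hr3
    have e0 : d 0 ≤ 1 := by by_contra hcc; exact hr1 (dd_le_of (by omega) (by omega))
    have e2 : ¬(1 ≤ d 0 ∧ 1 ≤ d 1) := fun hcc => hr3 (dd_le_of hcc.1 hcc.2)
    have e1 : d 1 ≤ 2 := by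
      by_contra hcc
      have hle : dd 0 2 ≤ d := dd_le_of (by omega) (by omega)
      have hne2 : dd 0 2 ≠ d := by
        intro hh
        have := congrArg (fun u : Fin 2 →₀ ℕ => u 1) hh
        simp at this
        omega
      have hlt := toSyn_lt_of m hle hne2
      have hle2 := le_leadMon m hd
      rw [hlm2] at hle2
      exact absurd hle2 (not_le.mpr hlt)
    by_cases hq : d 1 = 2
    · left; rw [eq_dd d, (by omega : d 0 = 0), hq]
    · right; exact enum3 e0 (by omega) e2
  have hg2Y : g2 = fY := by
    apply sub_eq_zero.mp
    apply affine_zero hPQ hPR hQR (Ideal.sub_mem _ hI2 fY_mem)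
    intro u hu
    have hune : u ≠ dd 0 2 := by
      intro hh
      apply MvPolynomial.mem_support_iff.mp hu
      rw [hh, MvPolynomial.coeff_sub, hcg2, coeff_fY_02, sub_self]
    rcases Finset.mem_union.mp (MvPolynomial.support_sub _ _ _ hu) with h | h
    · rcases hsupp2 u h with h' | h' | h' | h'
      · exact absurd h' hune
      · left; exact h'
      · right; left; exact h'
      · right; right; exact h'
    · rcases supp_fY h with h' | h'
      · exact absurd h' hune
      · right; right; exact h'
  -- conclude
  apply Finset.Subset.antisymm
  · intro g hgG
    by_cases e1 : g = g1
    · rw [e1, hg1X]; exact Finset.mem_insert_self _ _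
    by_cases e2 : g = g2
    · rw [e2, hg2Y]; exact Finset.mem_insert.mpr (Or.inr (Finset.mem_insert_self _ _))
    by_cases e3 : g = g3
    · rw [e3, hg3E]
      exact Finset.mem_insert.mpr (Or.inr (Finset.mem_insert.mpr
        (Or.inr (Finset.mem_singleton_self _))))
    exfalso
    apply hne g hgG
    apply affine_zero hPQ hPR hQR (hsub (Finset.mem_coe.mpr hgG))
    intro d hd
    have hr1 := hred g hgG g1 hg1G (fun h => e1 h.symm) d hd
    have hr2 := hred g hgG g2 hg2G (fun h => e2 h.symm) d hd
    have hr3 := hred g hgG g3 hg3G (fun h => e3 h.symm) d hd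
    rw [hlm1] at hr1
    rw [hlm2] at hr2
    rw [hlm3] at hr3
    have a0 : d 0 ≤ 1 := by by_contra hcc; exact hr1 (dd_le_of (by omega) (by omega))
    have a1 : d 1 ≤ 1 := by by_contra hcc; exact hr2 (dd_le_of (by omega) (by omega))
    exact enum3 a0 a1 (fun hcc => hr3 (dd_le_of hcc.1 hcc.2))
  · intro g hg
    rcases Finset.mem_insert.mp hg with rfl | hg'
    · rw [← hg1X]; exact hg1G
    rcases Finset.mem_insert.mp hg' with rfl | hg''
    · rw [← hg2Y]; exact hg2G
    rw [Finset.mem_singleton] at hg''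
    rw [hg'', ← hg3E]
    exact hg3G

lemma rhs_calc : ∀ P Q R : Fin 2 → ZMod 2, P ≠ Q → P ≠ R → Q ≠ R →
    ((if (Finset.univ.filter fun i : Fin 2 => P i ≠ Q i).card = 1 then 1 else 0) +
     (if (Finset.univ.filter fun i : Fin 2 => P i ≠ R i).card = 1 then 1 else 0) +
     (if (Finset.univ.filter fun i : Fin 2 => Q i ≠ R i).card = 1 then 1 else 0)) = 2 := by
  decide

end GBAux


/-- For three pairwise-distinct points of `(ZMod 2)^2`, the number of distinct reduced
Gröbner bases of their vanishing ideal equals `2 - max 0 ((#{i : sᵢ = 1}) - 1)`,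
where `s₁, s₂, s₃` are the numbers of coordinates in which the pairs `(P,Q)`, `(P,R)`,
`(Q,R)` differ (truncated ℕ-subtraction realizes the `max 0` here). -/
theorem num_reduced_GB_three_points_Z2_n2 (P Q R : Fin 2 → ZMod 2)
    (hPQ : P ≠ Q) (hPR : P ≠ R) (hQR : Q ≠ R) :
    numReducedGB (vanishingIdeal (ZMod 2) ({P, Q, R} : Set (Fin 2 → ZMod 2))) =
      2 - (((if (Finset.univ.filter fun i : Fin 2 => P i ≠ Q i).card = 1 then 1 else 0) +
            (if (Finset.univ.filter fun i : Fin 2 => P i ≠ R i).card = 1 then 1 else 0) +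
            (if (Finset.univ.filter fun i : Fin 2 => Q i ≠ R i).card = 1 then 1 else 0)) - 1) := by
  have hnum : numReducedGB (vanishingIdeal (ZMod 2) ({P, Q, R} : Set (Fin 2 → ZMod 2))) = 1 := by
    have hset : {G : Finset (MvPolynomial (Fin 2) (ZMod 2)) |
        ∃ m : MonomialOrder.{0,0} (Fin 2),
          IsReducedGroebnerBasis m (vanishingIdeal (ZMod 2) ({P, Q, R} : Set (Fin 2 → ZMod 2))) G} =
        {({GBAux.fX, GBAux.fY, GBAux.fE (GBAux.pa P Q R)} :
          Finset (MvPolynomial (Fin 2) (ZMod 2)))} := by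
      apply Set.eq_singleton_iff_unique_mem.mpr
      constructor
      · exact ⟨MonomialOrder.lex, GBAux.isRGB hPQ hPR hQR _⟩
      · rintro G ⟨m, hm⟩
        exact GBAux.unique_GB hPQ hPR hQR m G hm
    unfold numReducedGB
    rw [hset]
    exact Set.ncard_singleton _
  rw [hnum, GBAux.rhs_calc P Q R hPQ hPR hQR]
end
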